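/- arXiv:1703.04436 — 11 statements merged into one kernel-verified Lean document; each statement's English description precedes it below -/
import Mathlib

section
/- There is no monic real polynomial of degree 4 with coefficient sign pattern (+,-,-,-,+) (all coefficients nonzero) having exactly 0 positive roots and exactly 2 negative roots counted with multiplicity. -/
open Polynomial

/-- Number of positive real roots counted with multiplicity. -/
noncomputable def posRoots (p : Polynomial ℝ) : ℕ :=
  (p.roots.filter (fun x => 0 < x)).card

/-- Number of negative real roots counted with multiplicity. -/
noncomputable def negRoots (p : Polynomial ℝ) : ℕ :=
  (p.roots.filter (fun x => x < 0)).card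

/-!
Two negative roots `a, b` split `p = (X - a)(X - b)(X² + βX + γ)`. The negative
`X³`-coefficient gives `β < a + b < 0`, and the negative `X`-coefficient, combined with
`ab ≤ (a + b)² / 4`, forces `β² > 4γ`. So the quadratic factor has real roots, and since `β < 0` the larger one,
`(-β + √(β² - 4γ)) / 2`, is a positive root of `p`.
-/

namespace Polynomial

theorem Monic.exists_eq_prod_X_sub_C_mul {R : Type*} [CommRing R] [IsDomain R] {p : R[X]}
    (hp : p.Monic) {s : Multiset R} (hs : s ≤ p.roots) :
    ∃ q : R[X], q.Monic ∧ q.natDegree + Multiset.card s = p.natDegree ∧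
      p = (s.map (X - C ·)).prod * q := by
  obtain ⟨q, rfl⟩ := (Multiset.prod_X_sub_C_dvd_iff_le_roots hp.ne_zero s).mpr hs
  have hprod : (s.map (X - C ·)).prod.Monic := monic_multisetProd_X_sub_C s
  have hq : q.Monic := hprod.of_mul_monic_left hp
  refine ⟨q, hq, ?_, rfl⟩
  rw [hprod.natDegree_mul hq, natDegree_multiset_prod_X_sub_C_eq_card, add_comm]

theorem Monic.eq_X_sq_add_C_mul_X_add_C {R : Type*} [Semiring R] {q : R[X]} (hq : q.Monic)
    (h : q.natDegree = 2) : q = X ^ 2 + C (q.coeff 1) * X + C (q.coeff 0) := by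
  conv_lhs => rw [as_sum_range_C_mul_X_pow q, h]
  have hlead : q.coeff 2 = 1 := h ▸ hq.coeff_natDegree
  simp [Finset.sum_range_succ, hlead]
  abel

section Quartic

variable {R : Type*} [CommRing R] (a b β γ : R)

theorem X_sub_C_mul_X_sub_C_mul_quadratic :
    (X - C a) * (X - C b) * (X ^ 2 + C β * X + C γ) =
      X ^ 4 + C (β - a - b) * X ^ 3 + C (γ - β * (a + b) + a * b) * X ^ 2 +
        C (a * b * β - γ * (a + b)) * X + C (a * b * γ) := by
  simp only [C_add, C_sub, C_mul]
  ring

theorem coeff_three_X_sub_C_mul_X_sub_C_mul_quadratic :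
    ((X - C a) * (X - C b) * (X ^ 2 + C β * X + C γ)).coeff 3 = β - a - b := by
  rw [X_sub_C_mul_X_sub_C_mul_quadratic]
  simp only [coeff_add, coeff_C_mul, coeff_X_pow, coeff_X, coeff_C]
  norm_num

theorem coeff_one_X_sub_C_mul_X_sub_C_mul_quadratic :
    ((X - C a) * (X - C b) * (X ^ 2 + C β * X + C γ)).coeff 1 = a * b * β - γ * (a + b) := by
  rw [X_sub_C_mul_X_sub_C_mul_quadratic]
  simp only [coeff_add, coeff_C_mul, coeff_X_pow, coeff_X, coeff_C]
  norm_num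

end Quartic

end Polynomial

-- The hypotheses say that the coefficients of `X ^ 3` and `X` in
-- `(X - C a) * (X - C b) * (X ^ 2 + C β * X + C γ)` are negative.
theorem discrim_pos_of_coeff_three_neg_of_coeff_one_neg {a b β γ : ℝ} (ha : a < 0) (hb : b < 0)
    (h3 : β - a - b < 0) (h1 : a * b * β - γ * (a + b) < 0) : 0 < discrim 1 β γ := by
  have hs : 0 < -(a + b) := by linarith
  have hab : 4 * (a * b) ≤ (a + b) ^ 2 := by nlinarith [sq_nonneg (a - b)]
  have key : -(a + b) * (4 * γ) < -(a + b) * β ^ 2 := by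
    nlinarith [mul_le_mul_of_nonneg_left hab (by linarith : 0 ≤ -β),
      mul_pos (mul_pos hs (by linarith : 0 < -β)) (by linarith : 0 < -β + (a + b))]
  rw [discrim, mul_one, sub_pos]
  exact lt_of_mul_lt_mul_left key hs.le

theorem exists_pos_quadratic_eq_zero {β γ : ℝ} (hβ : β < 0) (hdisc : 0 ≤ discrim 1 β γ) :
    ∃ t : ℝ, 0 < t ∧ t ^ 2 + β * t + γ = 0 := by
  set s := √(discrim 1 β γ)
  have hs : discrim 1 β γ = s * s := (Real.mul_self_sqrt hdisc).symm
  have hroot := (quadratic_eq_zero_iff one_ne_zero hs ((-β + s) / (2 * 1))).mpr (Or.inl rfl)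
  refine ⟨(-β + s) / 2, div_pos (by linarith [Real.sqrt_nonneg (discrim 1 β γ)]) two_pos, ?_⟩
  linear_combination hroot

theorem posRoots_ne_zero_of_isRoot {p : ℝ[X]} (hp : p ≠ 0) {t : ℝ} (ht : 0 < t)
    (hroot : p.IsRoot t) : posRoots p ≠ 0 := by
  unfold posRoots
  exact (Multiset.card_pos_iff_exists_mem.mpr
    ⟨t, Multiset.mem_filter.mpr ⟨(mem_roots hp).mpr hroot, ht⟩⟩).ne'

theorem exists_neg_pair_le_roots_of_negRoots_eq_two {p : ℝ[X]} (h : negRoots p = 2) :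
    ∃ a b : ℝ, a < 0 ∧ b < 0 ∧ {a, b} ≤ p.roots := by
  obtain ⟨a, b, hab⟩ := Multiset.card_eq_two.mp h
  have hneg : ∀ x ∈ ({a, b} : Multiset ℝ), x < 0 := by
    intro x hx
    rw [← hab] at hx
    exact (Multiset.mem_filter.mp hx).2
  exact ⟨a, b, hneg a (by simp), hneg b (by simp), hab ▸ Multiset.filter_le _ _⟩

theorem grabiner_nonrealizable_deg4_minus_general (p : Polynomial ℝ)
    (hm : p.Monic) (hd : p.natDegree = 4)
    (h3 : p.coeff 3 < 0) (h1 : p.coeff 1 < 0) :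
    ¬ (posRoots p = 0 ∧ negRoots p = 2) := by
  rintro ⟨hpos, hneg⟩
  obtain ⟨a, b, ha, hb, hab⟩ := exists_neg_pair_le_roots_of_negRoots_eq_two hneg
  obtain ⟨q, hq, hqdeg, hpq⟩ := hm.exists_eq_prod_X_sub_C_mul hab
  have hq2 : q.natDegree = 2 := by
    simp only [Multiset.insert_eq_cons, Multiset.card_cons, Multiset.card_singleton] at hqdeg
    omega
  set β := q.coeff 1
  set γ := q.coeff 0
  replace hpq : p = (X - C a) * (X - C b) * (X ^ 2 + C β * X + C γ) := by
    rw [hpq, ← hq.eq_X_sq_add_C_mul_X_add_C hq2]; simp [mul_assoc]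
  rw [hpq, coeff_three_X_sub_C_mul_X_sub_C_mul_quadratic] at h3
  rw [hpq, coeff_one_X_sub_C_mul_X_sub_C_mul_quadratic] at h1
  obtain ⟨t, ht, hqt⟩ := exists_pos_quadratic_eq_zero (by linarith : β < 0)
    (discrim_pos_of_coeff_three_neg_of_coeff_one_neg ha hb h3 h1).le
  refine posRoots_ne_zero_of_isRoot hm.ne_zero ht ?_ hpos
  simp [hpq, hqt]

theorem grabiner_nonrealizable_deg4_minus (p : Polynomial ℝ)
    (hm : p.Monic) (hd : p.natDegree = 4)
    (h3 : p.coeff 3 < 0) (h2 : p.coeff 2 < 0) (h1 : p.coeff 1 < 0)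
    (h0 : 0 < p.coeff 0) :
    ¬ (posRoots p = 0 ∧ negRoots p = 2) :=
  grabiner_nonrealizable_deg4_minus_general p hm hd h3 h1
end

section
/- There is no monic real polynomial of degree 4 with coefficient sign pattern (+,+,-,+,+) (all coefficients nonzero) having exactly 2 positive roots and 0 negative roots counted with multiplicity. -/
open Polynomial

/-! Since `p` has no negative roots and `p 0 ≠ 0`, its two real roots `r, s` are positive and
`p = (X - r)(X - s)(X² + bX + c)` with `b² < 4c`. Then `a₃ = b - (r + s) > 0`, and by AM-GM
`b r s ≤ b (r + s)² / 4 ≤ b² (r + s) / 4 ≤ c (r + s)`, so `a₁ = b r s - c (r + s) ≤ 0`. -/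

lemma pos_of_mem_roots_of_negRoots_eq_zero {p : ℝ[X]} (hneg : negRoots p = 0) (h0 : p.coeff 0 ≠ 0) {x : ℝ}
    (hx : x ∈ p.roots) : 0 < x := by
  have hx0 : x ≠ 0 := by
    rintro rfl
    exact h0 (coeff_zero_eq_eval_zero p ▸ (mem_roots'.1 hx).2)
  have hxneg : ¬ x < 0 := fun h ↦
    Multiset.card_eq_zero.1 hneg ▸ Multiset.mem_filter.2 ⟨hx, h⟩ |> Multiset.notMem_zero x
  exact lt_of_le_of_ne (not_lt.1 hxneg) hx0.symm

lemma exists_eq_X_sub_C_mul_X_sub_C_mul_quadratic {R : Type*} [CommRing R] [IsDomain R]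
    {p : R[X]} (hp : p.IsMonicOfDegree 4) {r s : R} (hrs : p.roots = {r, s}) :
    ∃ b c : R, p = (X - C r) * (X - C s) * (X ^ 2 + C b * X + C c) ∧
      (X ^ 2 + C b * X + C c).roots = 0 := by
  obtain ⟨q, hpq, -, hq⟩ := p.exists_prod_multiset_X_sub_C_mul
  rw [hrs] at hpq
  simp only [Multiset.insert_eq_cons, Multiset.map_cons, Multiset.map_singleton,
    Multiset.prod_cons, Multiset.prod_singleton] at hpq
  have hq2 : q.IsMonicOfDegree 2 :=
    ((isMonicOfDegree_X_sub_one r).mul (isMonicOfDegree_X_sub_one s)).of_mul_left (hpq ▸ hp)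
  obtain ⟨b, c, rfl⟩ := isMonicOfDegree_two_iff.1 hq2
  exact ⟨b, c, hpq.symm, hq⟩

lemma discrim_neg_of_roots_eq_zero {b c : ℝ} (h : (X ^ 2 + C b * X + C c : ℝ[X]).roots = 0) :
    discrim 1 b c < 0 := by
  by_contra! hd
  obtain ⟨x, hx⟩ := exists_quadratic_eq_zero one_ne_zero
    ⟨√(discrim 1 b c), (Real.mul_self_sqrt hd).symm⟩
  have : x ∈ (X ^ 2 + C b * X + C c : ℝ[X]).roots := by
    rw [mem_roots (isMonicOfDegree_add_add_two b c).ne_zero]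
    simp only [IsRoot, eval_add, eval_pow, eval_mul, eval_C, eval_X]
    linear_combination hx
  exact Multiset.notMem_zero x (h ▸ this)

section
variable (r s b c : ℝ)

lemma X_sub_C_mul_X_sub_C_mul_quadratic_eq :
    (X - C r) * (X - C s) * (X ^ 2 + C b * X + C c) = X ^ 4 + C (b - (r + s)) * X ^ 3
      + C (c + r * s - b * (r + s)) * X ^ 2 + C (b * r * s - c * (r + s)) * X + C (c * r * s) := by
  simp only [map_sub, map_add, map_mul]
  ring

lemma coeff_three_X_sub_C_mul_X_sub_C_mul_quadratic :
    ((X - C r) * (X - C s) * (X ^ 2 + C b * X + C c)).coeff 3 = b - (r + s) := by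
  rw [X_sub_C_mul_X_sub_C_mul_quadratic_eq]
  simp only [coeff_add, coeff_C_mul, coeff_X_pow, coeff_X, coeff_C]
  norm_num

lemma coeff_one_X_sub_C_mul_X_sub_C_mul_quadratic :
    ((X - C r) * (X - C s) * (X ^ 2 + C b * X + C c)).coeff 1 = b * r * s - c * (r + s) := by
  rw [X_sub_C_mul_X_sub_C_mul_quadratic_eq]
  simp only [coeff_add, coeff_C_mul, coeff_X_pow, coeff_X, coeff_C]
  norm_num

end

lemma mul_mul_le_of_discrim_neg {r s b c : ℝ} (hr : 0 ≤ r) (hs : 0 ≤ s) (hdisc : discrim 1 b c < 0)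
    (hb : r + s < b) : b * r * s ≤ c * (r + s) := by
  rw [discrim] at hdisc
  have hrs : 0 ≤ r + s := add_nonneg hr hs
  have hb0 : 0 ≤ b := hrs.trans hb.le
  calc b * r * s ≤ b * (r + s) ^ 2 / 4 := by nlinarith [mul_nonneg hb0 (sq_nonneg (r - s))]
    _ ≤ b ^ 2 * (r + s) / 4 := by nlinarith [mul_nonneg (mul_nonneg hb0 hrs) (sub_nonneg.2 hb.le)]
    _ ≤ c * (r + s) := by nlinarith

theorem grabiner_nonrealizable_deg4_plus_general (p : Polynomial ℝ)
    (hm : p.Monic) (hd : p.natDegree = 4)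
    (h3 : 0 < p.coeff 3) (h1 : 0 < p.coeff 1)
    (h0 : 0 < p.coeff 0) :
    ¬ (posRoots p = 2 ∧ negRoots p = 0) := by
  rintro ⟨hpos, hneg⟩
  have hroots : ∀ x ∈ p.roots, 0 < x := fun x ↦ pos_of_mem_roots_of_negRoots_eq_zero hneg h0.ne'
  rw [posRoots, Multiset.filter_eq_self.2 hroots] at hpos
  obtain ⟨r, s, hrs⟩ := Multiset.card_eq_two.1 hpos
  have hr : 0 < r := hroots r (by simp [hrs])
  have hs : 0 < s := hroots s (by simp [hrs])
  obtain ⟨b, c, rfl, hq⟩ := exists_eq_X_sub_C_mul_X_sub_C_mul_quadratic ⟨hd, hm⟩ hrs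
  rw [coeff_three_X_sub_C_mul_X_sub_C_mul_quadratic] at h3
  rw [coeff_one_X_sub_C_mul_X_sub_C_mul_quadratic] at h1
  have := mul_mul_le_of_discrim_neg hr.le hs.le (discrim_neg_of_roots_eq_zero hq) (by linarith)
  linarith

theorem grabiner_nonrealizable_deg4_plus (p : Polynomial ℝ)
    (hm : p.Monic) (hd : p.natDegree = 4)
    (h3 : 0 < p.coeff 3) (h2 : p.coeff 2 < 0) (h1 : 0 < p.coeff 1)
    (h0 : 0 < p.coeff 0) :
    ¬ (posRoots p = 2 ∧ negRoots p = 0) :=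
  grabiner_nonrealizable_deg4_plus_general p hm hd h3 h1 h0
end

section
/- Let a, b, c, s, t be positive reals with s^2 < 4t and b^2 >= 4c. Then the polynomial a(x^2+bx+c)(x^2-sx+t) cannot simultaneously have its x^3-coefficient negative and its x-coefficient negative; that is, it is impossible that b < s and bt < cs. -/
theorem grabiner_factorization_argument (a b c s t : ℝ)
    (ha : 0 < a) (hb : 0 < b) (hc : 0 < c) (hs : 0 < s) (ht : 0 < t)
    (hst : s ^ 2 < 4 * t) (hbc : b ^ 2 ≥ 4 * c) :
    ¬ (b < s ∧ b * t < c * s) := by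
  rintro ⟨h1, h2⟩
  nlinarith [mul_pos hb hs, mul_pos hs hs, sq_nonneg (b - s), mul_lt_mul_of_pos_left hst hb]
end

section
/- Let d >= 5 be odd and 1 <= k <= (d-3)/2. Let P(x) = sum_{j=0}^d a_j x^{d-j} be a real polynomial whose coefficient sign sequence is: a_0 > 0, a_1 > 0, then k pairs (minus, plus), i.e. a_{2i} < 0, a_{2i+1} > 0 for i = 1,...,k, followed by a_j < 0 for all j with 2k+2 <= j <= d. Then P cannot have exactly 2s+1 positive roots (counted with multiplicity) with s >= 1 and zero negative roots. -/
open Polynomial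

/-- Power comparison: for `0 < β ≤ γ` and `a ≤ b`, `β^b γ^a ≤ β^a γ^b`. -/
lemma pow_mul_pow_le_of_le {β γ : ℝ} (hβ : 0 < β) (hβγ : β ≤ γ) {a b : ℕ} (hab : a ≤ b) :
    β ^ b * γ ^ a ≤ β ^ a * γ ^ b := by
  have hγ : 0 < γ := lt_of_lt_of_le hβ hβγ
  have h1 : β ^ b = β ^ a * β ^ (b - a) := by
    rw [← pow_add]; congr 1; omega
  have h2 : γ ^ b = γ ^ a * γ ^ (b - a) := by
    rw [← pow_add]; congr 1; omega
  have h3 : β ^ (b - a) ≤ γ ^ (b - a) := pow_le_pow_left₀ hβ.le hβγ _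
  rw [h1, h2]
  calc β ^ a * β ^ (b - a) * γ ^ a = β ^ a * γ ^ a * β ^ (b - a) := by ring
    _ ≤ β ^ a * γ ^ a * γ ^ (b - a) := by
        apply mul_le_mul_of_nonneg_left h3; positivity
    _ = β ^ a * (γ ^ a * γ ^ (b - a)) := by ring

lemma pow_mul_pow_lt_of_lt {β γ : ℝ} (hβ : 0 < β) (hβγ : β < γ) {a b : ℕ} (hab : a < b) :
    β ^ b * γ ^ a < β ^ a * γ ^ b := by
  have hγ : 0 < γ := lt_trans hβ hβγ
  have h1 : β ^ b = β ^ a * β ^ (b - a) := by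
    rw [← pow_add]; congr 1; omega
  have h2 : γ ^ b = γ ^ a * γ ^ (b - a) := by
    rw [← pow_add]; congr 1; omega
  have h3 : β ^ (b - a) < γ ^ (b - a) := pow_lt_pow_left₀ hβγ hβ.le (by omega)
  rw [h1, h2]
  calc β ^ a * β ^ (b - a) * γ ^ a = β ^ a * γ ^ a * β ^ (b - a) := by ring
    _ < β ^ a * γ ^ a * γ ^ (b - a) := by
        apply mul_lt_mul_of_pos_left h3; positivity
    _ = β ^ a * (γ ^ a * γ ^ (b - a)) := by ring

/-- Main theorem, part (i): the sign pattern `σ_k` is not realizable with any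
pair `(2s+1, 0)` for `s ≥ 1`.  Here `a_j = p.coeff (d - j)` is the coefficient of
`x^(d-j)`. -/
theorem sigma_k_not_realizable (d k : ℕ) (hd5 : 5 ≤ d) (hodd : Odd d)
    (hk1 : 1 ≤ k) (hk2 : 2 * k + 3 ≤ d)
    (p : Polynomial ℝ) (hdeg : p.natDegree = d)
    (ha0 : 0 < p.coeff d) (ha1 : 0 < p.coeff (d - 1))
    (hpairs : ∀ i, 1 ≤ i → i ≤ k →
      p.coeff (d - 2 * i) < 0 ∧ 0 < p.coeff (d - (2 * i + 1)))
    (htail : ∀ j, 2 * k + 2 ≤ j → j ≤ d → p.coeff (d - j) < 0) :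
    ∀ s : ℕ, 1 ≤ s → ¬ (posRoots p = 2 * s + 1 ∧ negRoots p = 0) := by
  intro s hs hcon
  obtain ⟨hpos, hneg⟩ := hcon
  simp only [posRoots] at hpos
  simp only [negRoots] at hneg
  obtain ⟨dd, hdd⟩ := hodd
  have hp0 : p ≠ 0 := by
    intro h; rw [h] at ha0; simp at ha0
  have hcoeff0 : p.coeff 0 < 0 := by
    have h := htail d (by omega) le_rfl
    rwa [Nat.sub_self] at h
  have heval0 : p.eval 0 < 0 := by
    rw [← Polynomial.coeff_zero_eq_eval_zero]; exact hcoeff0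
  have hnoneg : ∀ z : ℝ, z < 0 → p.eval z ≠ 0 := by
    intro z hz hz0
    have hzr : z ∈ p.roots := Polynomial.mem_roots'.mpr ⟨hp0, hz0⟩
    have hmem : z ∈ p.roots.filter (fun x => x < 0) := Multiset.mem_filter.mpr ⟨hzr, hz⟩
    rw [Multiset.card_eq_zero.mp hneg] at hmem
    exact Multiset.notMem_zero z hmem
  have hnegval : ∀ y : ℝ, 0 < y → p.eval (-y) < 0 := by
    intro y hy
    rcases lt_trichotomy (p.eval (-y)) 0 with h | h | h
    · exact h
    · exact absurd h (hnoneg (-y) (by linarith))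
    · exfalso
      have hIoo : (0 : ℝ) ∈ Set.Ioo (p.eval 0) (p.eval (-y)) := ⟨heval0, h⟩
      have hsub := intermediate_value_Ioo' (by linarith : (-y : ℝ) ≤ 0)
        (Polynomial.continuousOn p (s := Set.Icc (-y) 0))
      obtain ⟨z, hzmem, hzval⟩ := hsub hIoo
      exact hnoneg z hzmem.2 hzval
  have hposcoeff : ∀ j : ℕ, Odd j → j ≤ 2 * k + 1 → 0 < p.coeff (d - j) := by
    rintro j ⟨m, hm⟩ hj
    rcases Nat.eq_zero_or_pos m with h0 | h1
    · have hj1 : j = 1 := by omega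
      rw [hj1]; exact ha1
    · have hmk : m ≤ k := by omega
      have h := (hpairs m h1 hmk).2
      rwa [show 2 * m + 1 = j by omega] at h
  have hnegcoeff : ∀ j : ℕ, j ≤ d → (Even j ∧ 2 ≤ j) ∨ 2 * k + 2 ≤ j →
      p.coeff (d - j) < 0 := by
    intro j hjd hcase
    by_cases ht : 2 * k + 2 ≤ j
    · exact htail j ht hjd
    · rcases hcase with ⟨⟨m, hm⟩, h2⟩ | h'
      · have h1m : 1 ≤ m := by omega
        have hmk : m ≤ k := by omega
        have h := (hpairs m h1m hmk).1
        rwa [show 2 * m = j by omega] at h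
      · omega
  have hScard : (p.roots.filter (fun x => 0 < x)).card = 2 * s + 1 := hpos
  by_cases hdist : ∃ x ∈ p.roots.filter (fun x => 0 < x),
      ∃ y ∈ p.roots.filter (fun x => 0 < x), x ≠ y
  · -- CASE A : two distinct positive roots
    obtain ⟨x, hx, y, hy, hxy⟩ := hdist
    obtain ⟨β, γ, hβγ, hβ, hγ⟩ : ∃ β γ : ℝ, β < γ ∧
        β ∈ p.roots.filter (fun x => 0 < x) ∧ γ ∈ p.roots.filter (fun x => 0 < x) := by
      rcases hxy.lt_or_gt with h | h
      · exact ⟨x, y, h, hx, hy⟩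
      · exact ⟨y, x, h, hy, hx⟩
    have hβpos : 0 < β := (Multiset.mem_filter.mp hβ).2
    have hγpos : 0 < γ := (Multiset.mem_filter.mp hγ).2
    have hβroot : p.eval β = 0 := (Polynomial.mem_roots'.mp (Multiset.mem_filter.mp hβ).1).2
    have hγroot : p.eval γ = 0 := (Polynomial.mem_roots'.mp (Multiset.mem_filter.mp hγ).1).2
    set T : ℕ := d - (2 * k + 2) with hT
    set u : ℝ := β ^ (d - 2) * γ ^ T + β ^ T * γ ^ (d - 2) with hu
    set v : ℝ := β ^ T * γ ^ (d - 2) - β ^ (d - 2) * γ ^ T with hv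
    have hvpos : 0 < v := by
      have h := pow_mul_pow_lt_of_lt hβpos hβγ (show T < d - 2 by omega)
      rw [hv]; linarith only [h]
    set Q : ℕ → ℝ := fun i => 2 * γ ^ (d - 2 + T) * β ^ i - u * γ ^ i - v * (-γ) ^ i
      with hQdef
    have hterm : ∀ i ∈ Finset.range (d + 1), p.coeff i * Q i ≤ 0 := by
      intro i hi
      have hid : i ≤ d := by
        have := Finset.mem_range.mp hi; omega
      rcases Nat.even_or_odd i with he | ho
      · -- i even, j = d - i odd
        obtain ⟨a, ha⟩ := he
        have hng : (-γ) ^ i = γ ^ i := Even.neg_pow ⟨a, ha⟩ γ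
        have hQi : Q i = 2 * γ ^ (d - 2) * (β ^ i * γ ^ T - β ^ T * γ ^ i) := by
          simp only [hQdef, hng, hu, hv]
          rw [pow_add]; ring
        by_cases hcut : d - i ≤ 2 * k + 1
        · have hTi : T ≤ i := by omega
          have hc : 0 < p.coeff i := by
            have h := hposcoeff (d - i) ⟨dd - a, by omega⟩ hcut
            rwa [show d - (d - i) = i by omega] at h
          have hq : Q i ≤ 0 := by
            rw [hQi]
            have h := pow_mul_pow_le_of_le hβpos hβγ.le hTi
            have hX : β ^ i * γ ^ T - β ^ T * γ ^ i ≤ 0 := sub_nonpos.mpr h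
            exact mul_nonpos_iff.mpr (Or.inl ⟨by positivity, hX⟩)
          exact mul_nonpos_iff.mpr (Or.inl ⟨hc.le, hq⟩)
        · have hTi : i ≤ T := by omega
          have hc : p.coeff i < 0 := by
            have h := hnegcoeff (d - i) (by omega) (Or.inr (by omega))
            rwa [show d - (d - i) = i by omega] at h
          have hq : 0 ≤ Q i := by
            rw [hQi]
            have h := pow_mul_pow_le_of_le hβpos hβγ.le hTi
            have hX : 0 ≤ β ^ i * γ ^ T - β ^ T * γ ^ i := sub_nonneg.mpr h
            have h2 : (0:ℝ) ≤ 2 * γ ^ (d - 2) := by positivity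
            exact mul_nonneg h2 hX
          exact mul_nonpos_iff.mpr (Or.inr ⟨hc.le, hq⟩)
      · -- i odd, j = d - i even
        obtain ⟨a, ha⟩ := ho
        have hng : (-γ) ^ i = -γ ^ i := Odd.neg_pow ⟨a, ha⟩ γ
        have hQi : Q i = 2 * γ ^ T * (β ^ i * γ ^ (d - 2) - β ^ (d - 2) * γ ^ i) := by
          simp only [hQdef, hng, hu, hv]
          rw [pow_add]; ring
        rcases eq_or_lt_of_le hid with hieq | hilt
        · have hc : 0 < p.coeff i := by rw [hieq]; exact ha0
          have hq : Q i ≤ 0 := by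
            rw [hQi, hieq]
            have h := pow_mul_pow_le_of_le hβpos hβγ.le (show d - 2 ≤ d by omega)
            have hX : β ^ d * γ ^ (d - 2) - β ^ (d - 2) * γ ^ d ≤ 0 := sub_nonpos.mpr h
            exact mul_nonpos_iff.mpr (Or.inl ⟨by positivity, hX⟩)
          exact mul_nonpos_iff.mpr (Or.inl ⟨hc.le, hq⟩)
        · have hile : i ≤ d - 2 := by omega
          have hc : p.coeff i < 0 := by
            have h := hnegcoeff (d - i) (by omega)
              (Or.inl ⟨⟨dd - a, by omega⟩, by omega⟩)
            rwa [show d - (d - i) = i by omega] at h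
          have hq : 0 ≤ Q i := by
            rw [hQi]
            have h := pow_mul_pow_le_of_le hβpos hβγ.le hile
            have hX : 0 ≤ β ^ i * γ ^ (d - 2) - β ^ (d - 2) * γ ^ i := sub_nonneg.mpr h
            have h2 : (0:ℝ) ≤ 2 * γ ^ T := by positivity
            exact mul_nonneg h2 hX
          exact mul_nonpos_iff.mpr (Or.inr ⟨hc.le, hq⟩)
    have hsum : ∑ i ∈ Finset.range (d + 1), p.coeff i * Q i
        = 2 * γ ^ (d - 2 + T) * p.eval β - u * p.eval γ - v * p.eval (-γ) := by
      have e1 : p.eval β = ∑ i ∈ Finset.range (d + 1), p.coeff i * β ^ i := by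
        rw [Polynomial.eval_eq_sum_range, hdeg]
      have e2 : p.eval γ = ∑ i ∈ Finset.range (d + 1), p.coeff i * γ ^ i := by
        rw [Polynomial.eval_eq_sum_range, hdeg]
      have e3 : p.eval (-γ) = ∑ i ∈ Finset.range (d + 1), p.coeff i * (-γ) ^ i := by
        rw [Polynomial.eval_eq_sum_range, hdeg]
      rw [e1, e2, e3, Finset.mul_sum, Finset.mul_sum, Finset.mul_sum,
        ← Finset.sum_sub_distrib, ← Finset.sum_sub_distrib]
      exact Finset.sum_congr rfl (fun i _ => by simp only [hQdef]; ring)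
    have h1 : ∑ i ∈ Finset.range (d + 1), p.coeff i * Q i ≤ 0 := Finset.sum_nonpos hterm
    rw [hsum, hβroot, hγroot] at h1
    have h2 : p.eval (-γ) < 0 := hnegval γ hγpos
    simp only [mul_zero, sub_zero, zero_sub] at h1
    have h4 : 0 < v * -p.eval (-γ) := mul_pos hvpos (by linarith only [h2])
    have h5 : v * -p.eval (-γ) = -(v * p.eval (-γ)) := by ring
    linarith only [h1, h4, h5]
  · -- CASE B : all positive roots equal; get a double root
    push_neg at hdist
    have hSne : p.roots.filter (fun x => 0 < x) ≠ 0 := by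
      intro h; rw [h, Multiset.card_zero] at hScard; omega
    obtain ⟨r, hr⟩ := Multiset.exists_mem_of_ne_zero hSne
    have hrpos : 0 < r := (Multiset.mem_filter.mp hr).2
    have hcount : (p.roots.filter (fun x => 0 < x)).count r
        = (p.roots.filter (fun x => 0 < x)).card :=
      Multiset.count_eq_card.mpr (fun x hx => hdist r hr x hx)
    have h2c : 2 ≤ p.roots.count r := by
      have hle : (p.roots.filter (fun x => 0 < x)).count r ≤ p.roots.count r :=
        Multiset.count_le_of_le r (Multiset.filter_le _ _)
      omega
    have h2m : 2 ≤ p.rootMultiplicity r := by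
      rwa [Polynomial.count_roots] at h2c
    have hdvd : (X - C r) ^ 2 ∣ p :=
      dvd_trans (pow_dvd_pow _ h2m) (Polynomial.pow_rootMultiplicity_dvd p r)
    obtain ⟨w, hw⟩ := hdvd
    have hevr : p.eval r = 0 := by
      rw [hw]; simp [eval_mul, eval_pow, eval_sub, eval_X, eval_C]
    have hevr' : (derivative p).eval r = 0 := by
      rw [hw, derivative_mul, derivative_pow]
      simp [eval_mul, eval_add, eval_pow, eval_sub, eval_X, eval_C]
    have hdlt : (derivative p).natDegree < d + 1 := by
      have h := Polynomial.natDegree_derivative_le p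
      rw [hdeg] at h; omega
    set QB : ℕ → ℝ := fun i =>
        (2 * ((d : ℝ) - (k : ℝ) - 2) - 2 * (i : ℝ)) * r ^ i - (2 * (k : ℝ) + 1) * (-r) ^ i
      with hQBdef
    have hterm : ∀ i ∈ Finset.range (d + 1), p.coeff i * QB i ≤ 0 := by
      intro i hi
      have hid : i ≤ d := by
        have := Finset.mem_range.mp hi; omega
      have hrpi : (0:ℝ) < r ^ i := pow_pos hrpos i
      rcases Nat.even_or_odd i with he | ho
      · -- i even : j = d - i odd
        obtain ⟨a, ha⟩ := he
        have hng : (-r) ^ i = r ^ i := Even.neg_pow ⟨a, ha⟩ r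
        have hQi : QB i = (2 * (d : ℝ) - 2 * (i : ℝ) - 4 * (k : ℝ) - 5) * r ^ i := by
          simp only [hQBdef, hng]; ring
        by_cases hcut : d - i ≤ 2 * k + 1
        · have hc : 0 < p.coeff i := by
            have h := hposcoeff (d - i) ⟨dd - a, by omega⟩ hcut
            rwa [show d - (d - i) = i by omega] at h
          have hq : QB i ≤ 0 := by
            rw [hQi]
            have hnat : d ≤ 2 * k + 1 + i := by omega
            have hcast : (d : ℝ) ≤ 2 * (k : ℝ) + 1 + (i : ℝ) := by exact_mod_cast hnat
            have hscal : 2 * (d : ℝ) - 2 * (i : ℝ) - 4 * (k : ℝ) - 5 ≤ 0 := by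
              linarith only [hcast]
            exact mul_nonpos_iff.mpr (Or.inr ⟨hscal, hrpi.le⟩)
          exact mul_nonpos_iff.mpr (Or.inl ⟨hc.le, hq⟩)
        · have hc : p.coeff i < 0 := by
            have h := hnegcoeff (d - i) (by omega) (Or.inr (by omega))
            rwa [show d - (d - i) = i by omega] at h
          have hq : 0 ≤ QB i := by
            rw [hQi]
            have hob : Odd (d - i) := ⟨dd - a, by omega⟩
            obtain ⟨m, hm⟩ := hob
            have hnat : 2 * k + 3 + i ≤ d := by omega
            have hcast : 2 * (k : ℝ) + 3 + (i : ℝ) ≤ (d : ℝ) := by exact_mod_cast hnat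
            have hscal : 0 ≤ 2 * (d : ℝ) - 2 * (i : ℝ) - 4 * (k : ℝ) - 5 := by
              linarith only [hcast]
            exact mul_nonneg hscal hrpi.le
          exact mul_nonpos_iff.mpr (Or.inr ⟨hc.le, hq⟩)
      · -- i odd : j = d - i even
        obtain ⟨a, ha⟩ := ho
        have hng : (-r) ^ i = -r ^ i := Odd.neg_pow ⟨a, ha⟩ r
        have hQi : QB i = (2 * (d : ℝ) - 2 * (i : ℝ) - 3) * r ^ i := by
          simp only [hQBdef, hng]; ring
        rcases eq_or_lt_of_le hid with hieq | hilt
        · have hc : 0 < p.coeff i := by rw [hieq]; exact ha0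
          have hq : QB i ≤ 0 := by
            rw [hQi, hieq]
            have hscal : 2 * (d : ℝ) - 2 * (d : ℝ) - 3 ≤ 0 := by norm_num
            exact mul_nonpos_iff.mpr (Or.inr ⟨hscal, (pow_pos hrpos d).le⟩)
          exact mul_nonpos_iff.mpr (Or.inl ⟨hc.le, hq⟩)
        · have hc : p.coeff i < 0 := by
            have h := hnegcoeff (d - i) (by omega)
              (Or.inl ⟨⟨dd - a, by omega⟩, by omega⟩)
            rwa [show d - (d - i) = i by omega] at h
          have hq : 0 ≤ QB i := by
            rw [hQi]
            have hnat : i + 2 ≤ d := by omega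
            have hcast : (i : ℝ) + 2 ≤ (d : ℝ) := by exact_mod_cast hnat
            have hscal : 0 ≤ 2 * (d : ℝ) - 2 * (i : ℝ) - 3 := by linarith only [hcast]
            exact mul_nonneg hscal hrpi.le
          exact mul_nonpos_iff.mpr (Or.inr ⟨hc.le, hq⟩)
    have hR : ∑ i ∈ Finset.range (d + 1), p.coeff i * (i : ℝ) * r ^ i
        = ∑ i ∈ Finset.range d, p.coeff (i + 1) * ((i : ℝ) + 1) * r ^ (i + 1) := by
      rw [Finset.sum_range_succ' (fun i => p.coeff i * (i : ℝ) * r ^ i) d]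
      simp only [Nat.cast_zero, mul_zero, zero_mul, add_zero]
      exact Finset.sum_congr rfl (fun i _ => by push_cast; ring)
    have hL : r * (derivative p).eval r
        = ∑ i ∈ Finset.range d, p.coeff (i + 1) * ((i : ℝ) + 1) * r ^ (i + 1) := by
      rw [Polynomial.eval_eq_sum_range' hdlt r, Finset.mul_sum]
      have step1 : ∀ i ∈ Finset.range (d + 1),
          r * ((derivative p).coeff i * r ^ i)
            = p.coeff (i + 1) * ((i : ℝ) + 1) * r ^ (i + 1) := by
        intro i _
        rw [Polynomial.coeff_derivative]; ring
      rw [Finset.sum_congr rfl step1, Finset.sum_range_succ,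
        Polynomial.coeff_eq_zero_of_natDegree_lt (show p.natDegree < d + 1 by omega)]
      simp
    have hder : r * (derivative p).eval r
        = ∑ i ∈ Finset.range (d + 1), p.coeff i * (i : ℝ) * r ^ i := hL.trans hR.symm
    have hsum : ∑ i ∈ Finset.range (d + 1), p.coeff i * QB i
        = 2 * ((d : ℝ) - (k : ℝ) - 2) * p.eval r - 2 * (r * (derivative p).eval r)
          - (2 * (k : ℝ) + 1) * p.eval (-r) := by
      have e1 : p.eval r = ∑ i ∈ Finset.range (d + 1), p.coeff i * r ^ i := by
        rw [Polynomial.eval_eq_sum_range, hdeg]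
      have e3 : p.eval (-r) = ∑ i ∈ Finset.range (d + 1), p.coeff i * (-r) ^ i := by
        rw [Polynomial.eval_eq_sum_range, hdeg]
      rw [e1, e3, hder, Finset.mul_sum, Finset.mul_sum, Finset.mul_sum,
        ← Finset.sum_sub_distrib, ← Finset.sum_sub_distrib]
      exact Finset.sum_congr rfl (fun i _ => by simp only [hQBdef]; ring)
    have h1 : ∑ i ∈ Finset.range (d + 1), p.coeff i * QB i ≤ 0 := Finset.sum_nonpos hterm
    rw [hsum, hevr, hevr'] at h1
    have h2 : p.eval (-r) < 0 := hnegval r hrpos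
    simp only [mul_zero, sub_zero, zero_sub] at h1
    have hk0 : (0 : ℝ) < 2 * (k : ℝ) + 1 := by positivity
    have h4 : 0 < (2 * (k : ℝ) + 1) * -p.eval (-r) := mul_pos hk0 (by linarith only [h2])
    have h5 : (2 * (k : ℝ) + 1) * -p.eval (-r) = -((2 * (k : ℝ) + 1) * p.eval (-r)) := by ring
    linarith only [h1, h4, h5]
end

section
/- Let d >= 5 be odd and 1 <= k <= (d-3)/2. There exists a real polynomial of degree d with sign pattern sigma_k (two pluses, followed by k pairs (minus, plus), followed by d-2k-1 minuses) having exactly one positive real root (which is simple) and no negative real roots. -/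
open Polynomial

/-! ### Auxiliary construction -/

noncomputable def sigTT (d k j : ℕ) : ℝ :=
  if j = 0 then 0
  else if j = 1 then 2 * d
  else if j ≤ 2 * k + 1 then
    (if j % 2 = 0 then 2 * (d:ℝ) - (j / 2 : ℕ) - 1 else 2 * (d:ℝ) - (j / 2 : ℕ))
  else 2 * (d:ℝ) + k + 1 - j

noncomputable def sigB (d k j : ℕ) : ℝ := 8 * (d:ℝ)^2 + sigTT d k j

noncomputable def sigQ (d k : ℕ) : Polynomial ℝ :=
  ∑ j ∈ Finset.range d, C (sigB d k j) * X ^ (d - 1 - j)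

lemma sigTT_zero (d k : ℕ) : sigTT d k 0 = 0 := by simp [sigTT]

lemma sigTT_odd (d k i : ℕ) (h2 : i ≤ k) :
    sigTT d k (2 * i + 1) = 2 * (d:ℝ) - i := by
  rcases Nat.eq_zero_or_pos i with h | h
  · subst h; simp [sigTT]
  · have h0 : ¬ (2 * i + 1 = 0) := by omega
    have h1 : ¬ (2 * i + 1 = 1) := by omega
    have h2' : 2 * i + 1 ≤ 2 * k + 1 := by omega
    have h3 : ¬ ((2 * i + 1) % 2 = 0) := by omega
    have h4 : (2 * i + 1) / 2 = i := by omega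
    rw [sigTT, if_neg h0, if_neg h1, if_pos h2', if_neg h3, h4]

lemma sigTT_even (d k i : ℕ) (h1 : 1 ≤ i) (h2 : i ≤ k) :
    sigTT d k (2 * i) = 2 * (d:ℝ) - i - 1 := by
  have h0 : ¬ (2 * i = 0) := by omega
  have h1' : ¬ (2 * i = 1) := by omega
  have h2' : 2 * i ≤ 2 * k + 1 := by omega
  have h3 : (2 * i) % 2 = 0 := by omega
  have h4 : (2 * i) / 2 = i := by omega
  rw [sigTT, if_neg h0, if_neg h1', if_pos h2', if_pos h3, h4]

lemma sigTT_tail (d k j : ℕ) (h : 2 * k + 2 ≤ j) :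
    sigTT d k j = 2 * (d:ℝ) + k + 1 - j := by
  have h0 : ¬ (j = 0) := by omega
  have h1 : ¬ (j = 1) := by omega
  have h2 : ¬ (j ≤ 2 * k + 1) := by omega
  rw [sigTT, if_neg h0, if_neg h1, if_neg h2]

lemma sigTT_bounds (d k j : ℕ) (hk2 : 2 * k + 3 ≤ d) (hj : j < d) :
    0 ≤ sigTT d k j ∧ sigTT d k j ≤ 2 * d := by
  have hd : (1:ℝ) ≤ d := by exact_mod_cast Nat.one_le_iff_ne_zero.mpr (by omega)
  rw [sigTT]
  split_ifs with h0 h1 h2 h3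
  · constructor <;> nlinarith
  · constructor <;> nlinarith
  · have hh : (j / 2 : ℕ) ≤ k := by omega
    have hh2 : ((j / 2 : ℕ) : ℝ) ≤ k := by exact_mod_cast hh
    have hkd : (2 * k + 3 : ℝ) ≤ d := by exact_mod_cast hk2
    constructor <;> nlinarith
  · have hh : (j / 2 : ℕ) ≤ k := by omega
    have hh2 : ((j / 2 : ℕ) : ℝ) ≤ k := by exact_mod_cast hh
    have hkd : (2 * k + 3 : ℝ) ≤ d := by exact_mod_cast hk2
    constructor <;> nlinarith
  · have hjr : (j : ℝ) ≤ d - 1 := by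
      have h : (j:ℕ) + 1 ≤ d := hj
      have h2 := (Nat.cast_le (α := ℝ)).mpr h
      push_cast at h2; linarith
    have hjk : (k:ℝ) + 1 ≤ (j:ℝ) := by
      have : k + 1 ≤ j := by omega
      exact_mod_cast this
    constructor <;> nlinarith

lemma sigB_pos (d k j : ℕ) (hk2 : 2 * k + 3 ≤ d) (hj : j < d) : 0 < sigB d k j := by
  have h := (sigTT_bounds d k j hk2 hj).1
  have hd : (1:ℝ) ≤ d := by exact_mod_cast Nat.one_le_iff_ne_zero.mpr (by omega)
  rw [sigB]; nlinarith

lemma sigQ_coeff (d k m : ℕ) (hd : 1 ≤ d) (hm : m ≤ d - 1) :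
    (sigQ d k).coeff m = sigB d k (d - 1 - m) := by
  rw [sigQ, finset_sum_coeff]
  rw [Finset.sum_eq_single (d - 1 - m)]
  · rw [coeff_C_mul, coeff_X_pow, if_pos (by omega), mul_one]
  · intro j hj hne
    rw [coeff_C_mul, coeff_X_pow, if_neg, mul_zero]
    simp only [Finset.mem_range] at hj
    omega
  · intro h
    exact absurd (Finset.mem_range.mpr (by omega)) h

lemma sigQ_natDegree (d k : ℕ) (hd : 1 ≤ d) (hk2 : 2 * k + 3 ≤ d) :
    (sigQ d k).natDegree = d - 1 := by
  apply le_antisymm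
  · apply Polynomial.natDegree_sum_le_of_forall_le
    intro j hj
    refine (Polynomial.natDegree_C_mul_le _ _).trans ?_
    simp [Polynomial.natDegree_X_pow]
  · apply Polynomial.le_natDegree_of_ne_zero
    rw [sigQ_coeff d k (d-1) hd le_rfl]
    exact (sigB_pos d k _ hk2 (by omega)).ne'

lemma sigQ_eval (d k : ℕ) (x : ℝ) :
    (sigQ d k).eval x = ∑ j ∈ Finset.range d, sigB d k j * x ^ (d - 1 - j) := by
  rw [sigQ, Polynomial.eval_finset_sum]
  simp

lemma neg_one_pow_eq_iff' (j e : ℕ) (h : Even (j + e)) : ((-1:ℝ))^e = (-1)^j := by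
  have hpar := Nat.even_add.mp h
  rcases Nat.even_or_odd j with hj | hj
  · rw [hj.neg_one_pow, (hpar.mp hj).neg_one_pow]
  · have he : Odd e := by
      rcases Nat.even_or_odd e with he | he
      · exact absurd (hpar.mpr he) (Nat.not_even_iff_odd.mpr hj)
      · exact he
    rw [hj.neg_one_pow, he.neg_one_pow]

lemma alt_pos (d : ℕ) (hd5 : 5 ≤ d) (hodd : Odd d) (t : ℕ → ℝ)
    (hbd : ∀ j < d, 0 ≤ t j ∧ t j ≤ 2 * d) (y : ℝ) (hy : 0 < y) :
    0 < ∑ j ∈ Finset.range d, (8 * (d:ℝ)^2 + t j) * (-y) ^ (d - 1 - j) := by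
  set M : ℝ := max 1 (y ^ (d - 1)) with hM
  have hM1 : (1:ℝ) ≤ M := le_max_left _ _
  have hMp : 0 < M := by linarith
  have hpowM : ∀ e ≤ d - 1, y ^ e ≤ M := by
    intro e he
    rcases le_total y 1 with h | h
    · exact le_trans (pow_le_one₀ hy.le h) hM1
    · exact le_trans (pow_le_pow_right₀ h he) (le_max_right _ _)
  have hdr : (5:ℝ) ≤ d := by exact_mod_cast hd5
  have heven : Even (d - 1) := by
    rcases hodd with ⟨m, hm⟩; exact ⟨m, by omega⟩
  set S : ℝ := ∑ j ∈ Finset.range d, (-1:ℝ) ^ j * y ^ (d - 1 - j) with hS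
  have hSalt : S = ∑ j ∈ Finset.range d, (-y) ^ j := by
    rw [hS, ← Finset.sum_range_reflect]
    apply Finset.sum_congr rfl
    intro j hj
    simp only [Finset.mem_range] at hj
    have h1 : d - 1 - (d - 1 - j) = j := by omega
    have h2 : ((-1:ℝ)) ^ (d - 1 - j) = (-1) ^ j := by
      apply neg_one_pow_eq_iff'
      have h3 : j + (d - 1 - j) = d - 1 := by omega
      rw [h3]; exact heven
    rw [h1, h2]
    exact (neg_pow y j).symm
  have hgeom : S * (y + 1) = y ^ d + 1 := by
    have h := geom_sum_mul (-y) d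
    rw [← hSalt] at h
    have hnp : (-y) ^ d = -(y ^ d) := hodd.neg_pow y
    rw [hnp] at h
    linear_combination -h
  have hShalf : M / 2 ≤ S := by
    have hy1 : (0:ℝ) < y + 1 := by linarith
    rcases le_total y 1 with h | h
    · have hMe : M = 1 := max_eq_left (pow_le_one₀ hy.le h)
      rw [hMe]
      nlinarith [pow_pos hy d]
    · have hpd : y ^ (d-1) ≤ y ^ d := pow_le_pow_right₀ h (by omega)
      have hMe : M = y ^ (d - 1) := max_eq_right (one_le_pow₀ h)
      rw [hMe]
      have hmul : y ^ (d - 1) * y = y ^ d := by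
        rw [← pow_succ]; congr 1; omega
      nlinarith [one_le_pow₀ (n := d - 1) h]
  have hterm : ∀ j ∈ Finset.range d,
      8 * (d:ℝ)^2 * ((-1:ℝ) ^ j * y ^ (d - 1 - j)) - 2 * d * M
        ≤ (8 * (d:ℝ)^2 + t j) * (-y) ^ (d - 1 - j) := by
    intro j hj
    simp only [Finset.mem_range] at hj
    have hsgn : ((-y):ℝ) ^ (d - 1 - j) = (-1:ℝ) ^ j * y ^ (d - 1 - j) := by
      rw [neg_pow]
      congr 1
      apply neg_one_pow_eq_iff'
      have h3 : j + (d - 1 - j) = d - 1 := by omega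
      rw [h3]; exact heven
    rw [hsgn]
    have hyp : 0 ≤ y ^ (d - 1 - j) := by positivity
    have hyM : y ^ (d - 1 - j) ≤ M := hpowM _ (by omega)
    obtain ⟨ht0, ht1⟩ := hbd j hj
    rcases Nat.even_or_odd j with he | ho
    · rw [he.neg_one_pow]; nlinarith
    · rw [ho.neg_one_pow]; nlinarith
  have hsumge := Finset.sum_le_sum hterm
  have hlhs : ∑ j ∈ Finset.range d,
      (8 * (d:ℝ)^2 * ((-1:ℝ) ^ j * y ^ (d - 1 - j)) - 2 * d * M)
      = 8 * (d:ℝ)^2 * S - d * (2 * d * M) := by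
    rw [Finset.sum_sub_distrib, ← Finset.mul_sum, ← hS, Finset.sum_const,
      Finset.card_range, nsmul_eq_mul]
  rw [hlhs] at hsumge
  have hfin : 0 < 8 * (d:ℝ)^2 * S - d * (2 * d * M) := by nlinarith
  linarith

lemma sigQ_pos (d k : ℕ) (hd5 : 5 ≤ d) (hodd : Odd d) (hk2 : 2 * k + 3 ≤ d)
    (x : ℝ) : 0 < (sigQ d k).eval x := by
  rw [sigQ_eval]
  rcases le_or_gt 0 x with hx | hx
  · have hmem : d - 1 ∈ Finset.range d := Finset.mem_range.mpr (by omega)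
    have hle : sigB d k (d - 1) * x ^ (d - 1 - (d - 1)) ≤
        ∑ j ∈ Finset.range d, sigB d k j * x ^ (d - 1 - j) := by
      apply Finset.single_le_sum (f := fun j => sigB d k j * x ^ (d - 1 - j)) _ hmem
      intro j hj
      have := sigB_pos d k j hk2 (Finset.mem_range.mp hj)
      positivity
    have h0 : d - 1 - (d - 1) = 0 := by omega
    rw [h0, pow_zero, mul_one] at hle
    exact lt_of_lt_of_le (sigB_pos d k (d-1) hk2 (by omega)) hle
  · have hx' : x = -(-x) := by ring
    rw [hx']
    have := alt_pos d hd5 hodd (sigTT d k)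
      (fun j hj => sigTT_bounds d k j hk2 hj) (-x) (by linarith)
    simpa [sigB] using this

/-- Main theorem, part (ii): the sign pattern `σ_k` is realizable with the pair
`(1, 0)`; since positive roots are counted with multiplicity, `posRoots p = 1`
means the unique positive root is simple.  Here `a_j = p.coeff (d - j)`. -/
theorem sigma_k_realizable_one_zero (d k : ℕ) (hd5 : 5 ≤ d) (hodd : Odd d)
    (hk1 : 1 ≤ k) (hk2 : 2 * k + 3 ≤ d) :
    ∃ p : Polynomial ℝ, p.natDegree = d ∧
      0 < p.coeff d ∧ 0 < p.coeff (d - 1) ∧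
      (∀ i, 1 ≤ i → i ≤ k →
        p.coeff (d - 2 * i) < 0 ∧ 0 < p.coeff (d - (2 * i + 1))) ∧
      (∀ j, 2 * k + 2 ≤ j → j ≤ d → p.coeff (d - j) < 0) ∧
      posRoots p = 1 ∧ negRoots p = 0 := by
  have hd1 : 1 ≤ d := by omega
  set q : Polynomial ℝ := sigQ d k with hq
  set p : Polynomial ℝ := q * (X - C 1) with hp
  have hqpos : ∀ x : ℝ, 0 < q.eval x := sigQ_pos d k hd5 hodd hk2
  have hq0 : q ≠ 0 := by
    intro h
    have := hqpos 0
    rw [h] at this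
    simp at this
  have hXC : (X - C (1:ℝ)) ≠ 0 := X_sub_C_ne_zero 1
  have hqdeg : q.natDegree = d - 1 := sigQ_natDegree d k hd1 hk2
  have hpdeg : p.natDegree = d := by
    rw [hp, natDegree_mul hq0 hXC, hqdeg, natDegree_X_sub_C]
    omega
  have hqc : ∀ m : ℕ, m ≤ d - 1 → q.coeff m = sigB d k (d - 1 - m) :=
    fun m hm => sigQ_coeff d k m hd1 hm
  have hqtop : q.coeff d = 0 :=
    coeff_eq_zero_of_natDegree_lt (by omega)
  -- coefficient formula for 1 ≤ j ≤ d - 1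
  have hco : ∀ j : ℕ, 1 ≤ j → j ≤ d - 1 →
      p.coeff (d - j) = sigB d k j - sigB d k (j - 1) := by
    intro j hj1 hj2
    have h1 : d - j = (d - j - 1) + 1 := by omega
    rw [hp, h1, Polynomial.coeff_mul_X_sub_C, mul_one]
    rw [hqc (d - j - 1) (by omega), ← h1, hqc (d - j) (by omega)]
    congr 2 <;> omega
  have hcoeffd : p.coeff d = sigB d k 0 := by
    have h1 : d = (d - 1) + 1 := by omega
    rw [hp, h1, Polynomial.coeff_mul_X_sub_C, mul_one, ← h1, hqtop,
      hqc (d - 1) le_rfl, sub_zero]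
    congr 1
    omega
  have hdr : (1:ℝ) ≤ d := by exact_mod_cast hd1
  refine ⟨p, hpdeg, ?_, ?_, ?_, ?_, ?_, ?_⟩
  · -- a0 > 0
    rw [hcoeffd, sigB, sigTT_zero]
    nlinarith
  · -- a1 > 0
    rw [hco 1 le_rfl (by omega), sigB, sigB, sigTT_zero]
    have h1 : sigTT d k 1 = 2 * (d:ℝ) - (0:ℕ) := by
      have := sigTT_odd d k 0 (Nat.zero_le k)
      simpa using this
    rw [h1]
    push_cast
    linarith
  · -- zigzag coefficients
    intro i hi1 hi2
    constructor
    · rw [hco (2 * i) (by omega) (by omega), sigB, sigB]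
      have he : sigTT d k (2 * i) = 2 * (d:ℝ) - i - 1 := sigTT_even d k i hi1 hi2
      have h2 : 2 * i - 1 = 2 * (i - 1) + 1 := by omega
      have ho : sigTT d k (2 * i - 1) = 2 * (d:ℝ) - (i - 1 : ℕ) := by
        rw [h2]; exact sigTT_odd d k (i - 1) (by omega)
      rw [he, ho]
      have hc : ((i - 1 : ℕ) : ℝ) = (i : ℝ) - 1 := by
        have : (1:ℕ) ≤ i := hi1
        push_cast [Nat.cast_sub this]
        ring
      rw [hc]
      linarith
    · rw [hco (2 * i + 1) (by omega) (by omega), sigB, sigB]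
      have h21 : 2 * i + 1 - 1 = 2 * i := by omega
      rw [h21, sigTT_odd d k i hi2, sigTT_even d k i hi1 hi2]
      linarith
  · -- tail coefficients
    intro j hj1 hj2
    rcases eq_or_lt_of_le hj2 with hjd | hjd
    · -- j = d : constant coefficient
      have h0 : d - j = 0 := by omega
      rw [h0, hp, Polynomial.mul_coeff_zero]
      have hc0 : (X - C (1:ℝ)).coeff 0 = -1 := by simp
      rw [hc0, hqc 0 (by omega)]
      have := sigB_pos d k (d - 1 - 0) hk2 (by omega)
      linarith
    · have hj2' : j ≤ d - 1 := by omega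
      rw [hco j (by omega) hj2', sigB, sigB]
      have ht : sigTT d k j = 2 * (d:ℝ) + k + 1 - j := sigTT_tail d k j hj1
      rcases eq_or_lt_of_le hj1 with hje | hje
      · -- j = 2k+2
        have h2 : j - 1 = 2 * k + 1 := by omega
        have ho : sigTT d k (j - 1) = 2 * (d:ℝ) - k := by
          rw [h2]; exact sigTT_odd d k k le_rfl
        rw [ht, ho]
        have hjc : (j : ℝ) = 2 * k + 2 := by exact_mod_cast hje.symm
        rw [hjc]
        ring_nf
        linarith
      · -- j ≥ 2k+3
        have ht' : sigTT d k (j - 1) = 2 * (d:ℝ) + k + 1 - (j - 1 : ℕ) :=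
          sigTT_tail d k (j - 1) (by omega)
        rw [ht, ht']
        have hc : ((j - 1 : ℕ) : ℝ) = (j : ℝ) - 1 := by
          have h1j : (1:ℕ) ≤ j := by omega
          push_cast [Nat.cast_sub h1j]
          ring
        rw [hc]
        linarith
  · -- posRoots = 1
    have hroots : p.roots = q.roots + (X - C (1:ℝ)).roots :=
      roots_mul (mul_ne_zero hq0 hXC)
    have hqroots : q.roots = 0 := by
      apply Multiset.eq_zero_of_forall_notMem
      intro x hx
      exact (hqpos x).ne' ((mem_roots'.mp hx).2)
    rw [posRoots, hroots, hqroots, roots_X_sub_C, zero_add]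
    rw [Multiset.filter_singleton, if_pos (by norm_num : (0:ℝ) < 1)]
    simp
  · -- negRoots = 0
    have hroots : p.roots = q.roots + (X - C (1:ℝ)).roots :=
      roots_mul (mul_ne_zero hq0 hXC)
    have hqroots : q.roots = 0 := by
      apply Multiset.eq_zero_of_forall_notMem
      intro x hx
      exact (hqpos x).ne' ((mem_roots'.mp hx).2)
    rw [negRoots, hroots, hqroots, roots_X_sub_C, zero_add]
    rw [Multiset.filter_singleton, if_neg (by norm_num : ¬ ((1:ℝ) < 0))]
    simp
end

section
/- Let P_1 and P_2 be monic real polynomials of degrees d_1 and d_2 with all coefficients nonzero, having respectively pos_1, neg_1 and pos_2, neg_2 positive and negative roots counted with multiplicity. Then for all sufficiently small epsilon > 0, the polynomial epsilon^{d_2} P_1(x) P_2(x/epsilon) is a monic degree d_1+d_2 polynomial having exactly pos_1+pos_2 positive roots and neg_1+neg_2 negative roots counted with multiplicity. -/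
/-!
`ε ^ d₂ * P₂ (x / ε)` is `P₂.scaleRoots ε`, whose roots are those of `P₂` multiplied by `ε`,
with the same multiplicities; for `ε > 0` this preserves signs. Since the roots of a product are
the roots of its factors taken together, the root counts add up for every `ε > 0`.
-/

open Polynomial

namespace Polynomial

theorem C_pow_natDegree_mul_comp_C_inv_mul_X {K : Type*} [Field K] (p : K[X]) {s : K}
    (hs : s ≠ 0) : C (s ^ p.natDegree) * p.comp (C s⁻¹ * X) = p.scaleRoots s := by
  ext i
  rw [coeff_C_mul, comp_C_mul_X_coeff, coeff_scaleRoots]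
  rcases le_or_gt i p.natDegree with hi | hi
  · rw [pow_sub₀ s hs hi, inv_pow]
    ring
  · simp [coeff_eq_zero_of_natDegree_lt hi]

end Polynomial

theorem posRoots_mul {p q : ℝ[X]} (hpq : p * q ≠ 0) :
    posRoots (p * q) = posRoots p + posRoots q := by
  simp only [posRoots, roots_mul hpq, Multiset.filter_add, Multiset.card_add]

theorem negRoots_mul {p q : ℝ[X]} (hpq : p * q ≠ 0) :
    negRoots (p * q) = negRoots p + negRoots q := by
  simp only [negRoots, roots_mul hpq, Multiset.filter_add, Multiset.card_add]

theorem posRoots_scaleRoots (p : ℝ[X]) {s : ℝ} (hs : 0 < s) :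
    posRoots (p.scaleRoots s) = posRoots p := by
  rw [posRoots, posRoots, roots_scaleRoots p (isUnit_iff_ne_zero.2 hs.ne'),
    Multiset.filter_map, Multiset.card_map]
  exact congrArg _ (Multiset.filter_congr fun x _ => mul_pos_iff_of_pos_left hs)

theorem negRoots_scaleRoots (p : ℝ[X]) {s : ℝ} (hs : 0 < s) :
    negRoots (p.scaleRoots s) = negRoots p := by
  rw [negRoots, negRoots, roots_scaleRoots p (isUnit_iff_ne_zero.2 hs.ne'),
    Multiset.filter_map, Multiset.card_map]
  exact congrArg _ (Multiset.filter_congr fun x _ => smul_neg_iff_of_pos_left hs)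

theorem concatenation_roots_general (P₁ P₂ : Polynomial ℝ) (d₁ d₂ : ℕ)
    (hm₁ : P₁.Monic) (hm₂ : P₂.Monic)
    (hd₁ : P₁.natDegree = d₁) (hd₂ : P₂.natDegree = d₂) :
    ∃ ε₀ > (0 : ℝ), ∀ ε : ℝ, 0 < ε → ε < ε₀ →
      let Q : Polynomial ℝ := C (ε ^ d₂) * (P₁ * P₂.comp (C ε⁻¹ * X))
      Q.Monic ∧ Q.natDegree = d₁ + d₂ ∧
        posRoots Q = posRoots P₁ + posRoots P₂ ∧
        negRoots Q = negRoots P₁ + negRoots P₂ := by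
  refine ⟨1, one_pos, fun ε hε _ => ?_⟩
  have hQ : C (ε ^ d₂) * (P₁ * P₂.comp (C ε⁻¹ * X)) = P₁ * P₂.scaleRoots ε := by
    rw [mul_left_comm, ← hd₂, C_pow_natDegree_mul_comp_C_inv_mul_X P₂ hε.ne']
  have hm : (P₂.scaleRoots ε).Monic := (monic_scaleRoots_iff ε).2 hm₂
  have hne : P₁ * P₂.scaleRoots ε ≠ 0 := (hm₁.mul hm).ne_zero
  simp only [hQ]
  refine ⟨hm₁.mul hm, ?_, ?_, ?_⟩
  · rw [hm₁.natDegree_mul hm, natDegree_scaleRoots, hd₁, hd₂]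
  · rw [posRoots_mul hne, posRoots_scaleRoots P₂ hε]
  · rw [negRoots_mul hne, negRoots_scaleRoots P₂ hε]

theorem concatenation_roots (P₁ P₂ : Polynomial ℝ) (d₁ d₂ : ℕ)
    (hm₁ : P₁.Monic) (hm₂ : P₂.Monic)
    (hd₁ : P₁.natDegree = d₁) (hd₂ : P₂.natDegree = d₂)
    (hnz₁ : ∀ i ≤ d₁, P₁.coeff i ≠ 0) (hnz₂ : ∀ i ≤ d₂, P₂.coeff i ≠ 0) :
    ∃ ε₀ > (0 : ℝ), ∀ ε : ℝ, 0 < ε → ε < ε₀ →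
      let Q : Polynomial ℝ := C (ε ^ d₂) * (P₁ * P₂.comp (C ε⁻¹ * X))
      Q.Monic ∧ Q.natDegree = d₁ + d₂ ∧
        posRoots Q = posRoots P₁ + posRoots P₂ ∧
        negRoots Q = negRoots P₁ + negRoots P₂ :=
  concatenation_roots_general P₁ P₂ d₁ d₂ hm₁ hm₂ hd₁ hd₂
end

section
/- Let P_1, P_2 be monic real polynomials with all coefficients nonzero, of degrees d_1, d_2. If the constant term of P_1 is positive, then for all sufficiently small epsilon > 0, the coefficient sign sequence of epsilon^{d_2} P_1(x) P_2(x/epsilon) is the sign sequence of P_1 followed by the sign sequence of P_2 with its leading sign omitted. -/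
/-!
Writing `Q_ε = P₁ · S_ε` with `S_ε = ε^{d₂} P₂(X/ε) = P₂.scaleRoots ε`, the coefficients of `Q_ε`
depend continuously on `ε`, and `S_0 = X^{d₂}`, so for `i ≥ d₂` the `i`-th coefficient of `Q_ε`
tends to that of `P₁ X^{d₂}`, namely the `(i - d₂)`-th coefficient of `P₁`. For `i ≤ d₂`
rescale instead: `Q_ε(εX) = ε^{d₂} P₁(εX) P₂(X)`, so the `i`-th coefficient of `Q_ε` is
`ε^{d₂ - i}` times a quantity tending to `P₁(0)` times the `i`-th coefficient of `P₂`.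
-/

open Polynomial Filter Topology

namespace Polynomial

lemma scaleRoots_eq_C_pow_mul_comp {K : Type*} [Semifield K] (p : K[X]) {s : K} (hs : s ≠ 0) :
    p.scaleRoots s = C (s ^ p.natDegree) * p.comp (C s⁻¹ * X) := by
  ext n
  rw [coeff_scaleRoots, coeff_C_mul, comp_C_mul_X_coeff]
  rcases le_or_gt n p.natDegree with hn | hn
  · rw [pow_sub₀ _ hs hn, inv_pow]
    ring
  · simp [coeff_eq_zero_of_natDegree_lt hn]

section CommSemiring

variable {R : Type*} [CommSemiring R]

lemma coeff_mul_scaleRoots_of_le (q p : R[X]) (s : R) {i : ℕ} (hi : i ≤ p.natDegree) :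
    (q * p.scaleRoots s).coeff i = s ^ (p.natDegree - i) * (q.comp (C s * X) * p).coeff i := by
  simp only [coeff_mul, Finset.mul_sum, coeff_scaleRoots, comp_C_mul_X_coeff]
  refine Finset.sum_congr rfl fun x hx => ?_
  rw [Finset.HasAntidiagonal.mem_antidiagonal] at hx
  rw [show p.natDegree - x.2 = p.natDegree - i + x.1 by omega, pow_add]
  ring

variable [TopologicalSpace R] [IsTopologicalSemiring R]

lemma continuous_coeff_mul_scaleRoots (q p : R[X]) (i : ℕ) :
    Continuous fun s => (q * p.scaleRoots s).coeff i := by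
  simp only [coeff_mul, coeff_scaleRoots]
  fun_prop

lemma continuous_coeff_comp_C_mul_X_mul (q p : R[X]) (i : ℕ) :
    Continuous fun s => (q.comp (C s * X) * p).coeff i := by
  simp only [coeff_mul, comp_C_mul_X_coeff]
  fun_prop

end CommSemiring

variable {q p : ℝ[X]} {i : ℕ}

lemma eventually_pos_coeff_mul_scaleRoots_mul_coeff_sub (hp : p.Monic) (hi : p.natDegree ≤ i)
    (hq : q.coeff (i - p.natDegree) ≠ 0) :
    ∀ᶠ s in 𝓝 0, 0 < (q * p.scaleRoots s).coeff i * q.coeff (i - p.natDegree) := by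
  have hzero : (q * p.scaleRoots 0).coeff i = q.coeff (i - p.natDegree) := by
    rw [scaleRoots_zero, hp.leadingCoeff, one_smul, coeff_mul_X_pow', if_pos hi]
  refine continuousAt_const.eventually_lt
    ((continuous_coeff_mul_scaleRoots q p i).continuousAt.mul continuousAt_const) ?_
  simpa only [hzero] using mul_self_pos.2 hq

lemma eventually_pos_coeff_mul_scaleRoots_mul_coeff (hq : 0 < q.coeff 0) (hi : i ≤ p.natDegree)
    (hp : p.coeff i ≠ 0) :
    ∀ᶠ s in 𝓝[>] 0, 0 < (q * p.scaleRoots s).coeff i * p.coeff i := by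
  have hzero : (q.comp (C 0 * X) * p).coeff i = q.coeff 0 * p.coeff i := by
    rw [C_0, zero_mul, comp_zero, ← coeff_zero_eq_eval_zero, coeff_C_mul]
  have hlim : ∀ᶠ s in 𝓝 0, 0 < (q.comp (C s * X) * p).coeff i * p.coeff i := by
    refine continuousAt_const.eventually_lt
      ((continuous_coeff_comp_C_mul_X_mul q p i).continuousAt.mul continuousAt_const) ?_
    rw [hzero, mul_assoc]
    exact mul_pos hq (mul_self_pos.2 hp)
  filter_upwards [hlim.filter_mono nhdsWithin_le_nhds, self_mem_nhdsWithin] with s hs (hs₀ : 0 < s)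
  rw [coeff_mul_scaleRoots_of_le q p s hi, mul_assoc]
  exact mul_pos (pow_pos hs₀ _) hs

end Polynomial

theorem concatenation_sign_pattern (P₁ P₂ : Polynomial ℝ) (d₁ d₂ : ℕ)
    (hm₁ : P₁.Monic) (hm₂ : P₂.Monic)
    (hd₁ : P₁.natDegree = d₁) (hd₂ : P₂.natDegree = d₂)
    (hnz₁ : ∀ i ≤ d₁, P₁.coeff i ≠ 0) (hnz₂ : ∀ i ≤ d₂, P₂.coeff i ≠ 0)
    (hconst : 0 < P₁.coeff 0) :
    ∃ ε₀ > (0 : ℝ), ∀ ε : ℝ, 0 < ε → ε < ε₀ →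
      let Q : Polynomial ℝ := C (ε ^ d₂) * (P₁ * P₂.comp (C ε⁻¹ * X))
      Q.natDegree = d₁ + d₂ ∧
        (∀ i, d₂ ≤ i → i ≤ d₁ + d₂ → 0 < Q.coeff i * P₁.coeff (i - d₂)) ∧
        (∀ i, i < d₂ → 0 < Q.coeff i * P₂.coeff i) := by
  subst hd₁ hd₂
  have hhigh : ∀ᶠ ε in 𝓝 0, ∀ i ∈ Set.Icc P₂.natDegree (P₁.natDegree + P₂.natDegree),
      0 < (P₁ * P₂.scaleRoots ε).coeff i * P₁.coeff (i - P₂.natDegree) :=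
    (eventually_all_finite (Set.finite_Icc _ _)).2 fun i hi =>
      eventually_pos_coeff_mul_scaleRoots_mul_coeff_sub hm₂ hi.1 (hnz₁ _ (Nat.sub_le_iff_le_add.2 hi.2))
  have hlow : ∀ᶠ ε in 𝓝[>] 0, ∀ i ∈ {i | i < P₂.natDegree},
      0 < (P₁ * P₂.scaleRoots ε).coeff i * P₂.coeff i :=
    (eventually_all_finite (Set.finite_lt_nat _)).2 fun i hi =>
      eventually_pos_coeff_mul_scaleRoots_mul_coeff hconst hi.le (hnz₂ i hi.le)
  obtain ⟨ε₀, hε₀, hsub⟩ :=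
    mem_nhdsGT_iff_exists_Ioo_subset.1 ((hhigh.filter_mono nhdsWithin_le_nhds).and hlow)
  refine ⟨ε₀, hε₀, fun ε hε hεε₀ => ?_⟩
  obtain ⟨hh, hl⟩ := hsub ⟨hε, hεε₀⟩
  have hQ : C (ε ^ P₂.natDegree) * (P₁ * P₂.comp (C ε⁻¹ * X)) = P₁ * P₂.scaleRoots ε := by
    rw [scaleRoots_eq_C_pow_mul_comp P₂ hε.ne', mul_left_comm]
  simp only [hQ]
  refine ⟨?_, fun i h₁ h₂ => hh i ⟨h₁, h₂⟩, hl⟩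
  rw [hm₁.natDegree_mul ((monic_scaleRoots_iff ε).2 hm₂), natDegree_scaleRoots]
end

section
/- Let d be odd, k >= 1, and P(x) = a_0 x^d + a_2 x^{d-2} - x^{d-2k-3} with a_0 > 0, a_2 < 0, a_0 + a_2 = 1, and d - 2k - 3 >= 0. Then for every m = 1, 2, ..., d, the m-th derivative of P satisfies P^(m)(1) > 0. -/
open Polynomial

lemma descFactorial_strict_lt : ∀ {m a b : ℕ}, 1 ≤ m → a < b → m ≤ b →
    a.descFactorial m < b.descFactorial m := by
  intro m
  induction m with
  | zero => intro a b h; omega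
  | succ n ih =>
    intro a b _ hab hmb
    rw [Nat.descFactorial_succ, Nat.descFactorial_succ]
    rcases Nat.eq_zero_or_pos n with hn | hn
    · subst hn; simpa using hab
    · have hdB : 0 < b.descFactorial n := by
        rcases Nat.eq_zero_or_pos (b.descFactorial n) with h | h
        · rw [Nat.descFactorial_eq_zero_iff_lt] at h; omega
        · exact h
      calc (a - n) * a.descFactorial n ≤ (a - n) * b.descFactorial n :=
            Nat.mul_le_mul_left _ (Nat.descFactorial_le n hab.le)
        _ < (b - n) * b.descFactorial n :=
            Nat.mul_lt_mul_of_lt_of_le (by omega) le_rfl hdB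

theorem key_lemma_derivatives_positive (d k : ℕ) (hodd : Odd d) (hk : 1 ≤ k)
    (hkd : 2 * k + 3 ≤ d) (a₀ a₂ : ℝ) (ha₀ : 0 < a₀) (ha₂ : a₂ < 0)
    (hsum : a₀ + a₂ = 1) :
    ∀ m, 1 ≤ m → m ≤ d →
      0 < ((derivative)^[m]
        (C a₀ * X ^ d + C a₂ * X ^ (d - 2) - X ^ (d - (2 * k + 3)) :
          Polynomial ℝ)).eval 1 := by
  intro m hm1 hmd
  simp only [iterate_map_add, iterate_map_sub,
    Polynomial.iterate_derivative_C_mul, Polynomial.iterate_derivative_X_pow_eq_natCast_mul,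
    Polynomial.eval_add, Polynomial.eval_sub, Polynomial.eval_mul, Polynomial.eval_C,
    Polynomial.eval_natCast, Polynomial.eval_pow, Polynomial.eval_X, one_pow, mul_one]
  have hAB : (d - 2).descFactorial m < d.descFactorial m :=
    descFactorial_strict_lt hm1 (by omega) hmd
  have hBE : (d - (2 * k + 3)).descFactorial m ≤ (d - 2).descFactorial m :=
    Nat.descFactorial_le m (by omega)
  have hABc : ((d - 2).descFactorial m : ℝ) < (d.descFactorial m : ℝ) := by
    exact_mod_cast hAB
  have hBEc : ((d - (2 * k + 3)).descFactorial m : ℝ) ≤ ((d - 2).descFactorial m : ℝ) := by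
    exact_mod_cast hBE
  nlinarith [mul_pos ha₀ (sub_pos.mpr hABc)]
end

section
/- For every sign pattern of length 4 (for monic cubic polynomials with nonzero coefficients) and every pair (pos, neg) of nonnegative integers with pos at most the number of sign changes, pos congruent to the number of sign changes mod 2, neg at most the number of sign preservations, and neg congruent to the number of sign preservations mod 2, there exists a monic cubic polynomial with that sign pattern having exactly pos positive and neg negative roots counted with multiplicity. -/
open Polynomial

lemma expand3 (r1 r2 r3 : ℝ) :
    (X - C r1) * (X - C r2) * (X - C r3) =
      X ^ 3 + C (-(r1 + r2 + r3)) * X ^ 2 + C (r1*r2 + r1*r3 + r2*r3) * X ^ 1 + C (-(r1*r2*r3)) := by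
  simp only [map_neg, map_add, map_mul]
  ring

lemma roots3 (r1 r2 r3 : ℝ) :
    ((X - C r1) * (X - C r2) * (X - C r3)).roots = {r1, r2, r3} := by
  have h1 : (X - C r1 : ℝ[X]) ≠ 0 := X_sub_C_ne_zero r1
  have h2 : (X - C r2 : ℝ[X]) ≠ 0 := X_sub_C_ne_zero r2
  have h3 : (X - C r3 : ℝ[X]) ≠ 0 := X_sub_C_ne_zero r3
  rw [roots_mul (mul_ne_zero (mul_ne_zero h1 h2) h3), roots_mul (mul_ne_zero h1 h2),
    roots_X_sub_C, roots_X_sub_C, roots_X_sub_C]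
  rfl

lemma quad_ne_zero (b c : ℝ) : (X ^ 2 + C b * X + C c : ℝ[X]) ≠ 0 := by
  intro h
  have := congrArg (fun p => coeff p 2) h
  simp [coeff_add, coeff_X_pow, coeff_C] at this

lemma rootsQ (b c : ℝ) (h : b ^ 2 < 4 * c) : (X ^ 2 + C b * X + C c : ℝ[X]).roots = 0 := by
  rw [Multiset.eq_zero_iff_forall_notMem]
  intro x hx
  rw [mem_roots'] at hx
  have hx' : x ^ 2 + b * x + c = 0 := by
    have := hx.2
    simpa [IsRoot] using this
  nlinarith [sq_nonneg (2 * x + b)]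

lemma rootsQfull (r b c : ℝ) (h : b ^ 2 < 4 * c) :
    ((X - C r) * (X ^ 2 + C b * X + C c)).roots = {r} := by
  rw [roots_mul (mul_ne_zero (X_sub_C_ne_zero r) (quad_ne_zero b c)),
    roots_X_sub_C, rootsQ b c h, add_zero]

lemma expandQ (r b c : ℝ) :
    (X - C r) * (X ^ 2 + C b * X + C c) =
      X ^ 3 + C (b - r) * X ^ 2 + C (c - r * b) * X ^ 1 + C (-(r * c)) := by
  simp only [map_neg, map_add, map_mul, map_sub]
  ring

lemma key3 (ε : ℕ → ℝ) (hε0 : ε 0 = 1) (r1 r2 r3 : ℝ) (pos neg : ℕ)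
    (h1 : 0 < -(r1 + r2 + r3) * ε 1)
    (h2 : 0 < (r1*r2 + r1*r3 + r2*r3) * ε 2)
    (h3 : 0 < -(r1*r2*r3) * ε 3)
    (hp : (({r1, r2, r3} : Multiset ℝ).filter (fun x => 0 < x)).card = pos)
    (hn : (({r1, r2, r3} : Multiset ℝ).filter (fun x => x < 0)).card = neg) :
    ∃ p : Polynomial ℝ, p.Monic ∧ p.natDegree = 3 ∧
      (∀ i ≤ 3, 0 < p.coeff (3 - i) * ε i) ∧
      posRoots p = pos ∧ negRoots p = neg := by
  refine ⟨(X - C r1) * (X - C r2) * (X - C r3),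
    ((monic_X_sub_C r1).mul (monic_X_sub_C r2)).mul (monic_X_sub_C r3), ?_, ?_, ?_, ?_⟩
  · rw [expand3]; compute_degree!
  · intro i hi
    interval_cases i <;>
      simp only [expand3, coeff_add, coeff_C_mul, coeff_X_pow, coeff_C] <;>
      norm_num [hε0]
    · linarith [h1]
    · exact h2
    · nlinarith [h3]
  · rw [posRoots, roots3, hp]
  · rw [negRoots, roots3, hn]

lemma keyQ (ε : ℕ → ℝ) (hε0 : ε 0 = 1) (r b c : ℝ) (pos neg : ℕ)
    (hd : b ^ 2 < 4 * c)
    (h1 : 0 < (b - r) * ε 1)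
    (h2 : 0 < (c - r * b) * ε 2)
    (h3 : 0 < -(r * c) * ε 3)
    (hp : (({r} : Multiset ℝ).filter (fun x => 0 < x)).card = pos)
    (hn : (({r} : Multiset ℝ).filter (fun x => x < 0)).card = neg) :
    ∃ p : Polynomial ℝ, p.Monic ∧ p.natDegree = 3 ∧
      (∀ i ≤ 3, 0 < p.coeff (3 - i) * ε i) ∧
      posRoots p = pos ∧ negRoots p = neg := by
  have hq : (X ^ 2 + C b * X + C c : ℝ[X]).Monic := by
    rw [add_assoc]
    refine monic_X_pow_add (lt_of_le_of_lt ?_ (by norm_num : (1 : WithBot ℕ) < 2))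
    compute_degree
  refine ⟨(X - C r) * (X ^ 2 + C b * X + C c),
    (monic_X_sub_C r).mul hq, ?_, ?_, ?_, ?_⟩
  · rw [expandQ]; compute_degree!
  · intro i hi
    interval_cases i <;>
      simp only [expandQ, coeff_add, coeff_C_mul, coeff_X_pow, coeff_C] <;>
      norm_num [hε0]
    · linarith [h1]
    · exact h2
    · nlinarith [h3]
  · rw [posRoots, rootsQfull r b c hd, hp]
  · rw [negRoots, rootsQfull r b c hd, hn]

/-- Every admissible pair is realizable for every sign pattern in degree 3.
The sign pattern is `(ε 0, ε 1, ε 2, ε 3)` with `ε 0 = 1`, where `ε i` is the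
sign of the coefficient of `x^(3-i)`. -/
theorem deg3_all_admissible_pairs_realizable (ε : ℕ → ℝ) (hε0 : ε 0 = 1)
    (hε : ∀ i ≤ 3, ε i = 1 ∨ ε i = -1) (pos neg : ℕ)
    (hpos : pos ≤ ((Finset.range 3).filter (fun i => ε i * ε (i + 1) < 0)).card)
    (hposmod : pos % 2 =
      ((Finset.range 3).filter (fun i => ε i * ε (i + 1) < 0)).card % 2)
    (hneg : neg ≤ 3 - ((Finset.range 3).filter (fun i => ε i * ε (i + 1) < 0)).card)
    (hnegmod : neg % 2 =
      (3 - ((Finset.range 3).filter (fun i => ε i * ε (i + 1) < 0)).card) % 2) :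
    ∃ p : Polynomial ℝ, p.Monic ∧ p.natDegree = 3 ∧
      (∀ i ≤ 3, 0 < p.coeff (3 - i) * ε i) ∧
      posRoots p = pos ∧ negRoots p = neg := by
  have hr : (Finset.range 3) = {0, 1, 2} := rfl
  have e1 := hε 1 (by norm_num)
  have e2 := hε 2 (by norm_num)
  have e3 := hε 3 (by norm_num)
  rcases e1 with e1 | e1 <;> rcases e2 with e2 | e2 <;> rcases e3 with e3 | e3
  -- (+,+,+,+) : v = 0 ; pairs (0,3),(0,1)
  · have hv : ((Finset.range 3).filter (fun i => ε i * ε (i + 1) < 0)).card = 0 := by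
      rw [hr]; norm_num [Finset.filter_insert, Finset.filter_singleton, hε0, e1, e2, e3]
    rw [hv] at hpos hposmod hneg hnegmod
    have : pos = 0 := by omega
    subst this
    have : neg = 3 ∨ neg = 1 := by omega
    rcases this with h | h <;> subst h
    · exact key3 ε hε0 (-1) (-1) (-1) 0 3 (by rw [e1]; norm_num) (by rw [e2]; norm_num)
        (by rw [e3]; norm_num)
        (by norm_num [Multiset.insert_eq_cons, Multiset.filter_cons, Multiset.filter_singleton])
        (by norm_num [Multiset.insert_eq_cons, Multiset.filter_cons, Multiset.filter_singleton])
    · exact keyQ ε hε0 (-1) 0 1 0 1 (by norm_num) (by rw [e1]; norm_num)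
        (by rw [e2]; norm_num) (by rw [e3]; norm_num)
        (by rw [Multiset.filter_singleton]; norm_num)
        (by rw [Multiset.filter_singleton]; norm_num)
  -- (+,+,+,-) : v = 1 ; pairs (1,2),(1,0)
  · have hv : ((Finset.range 3).filter (fun i => ε i * ε (i + 1) < 0)).card = 1 := by
      rw [hr]; norm_num [Finset.filter_insert, Finset.filter_singleton, hε0, e1, e2, e3]
    rw [hv] at hpos hposmod hneg hnegmod
    have : pos = 1 := by omega
    subst this
    have : neg = 2 ∨ neg = 0 := by omega
    rcases this with h | h <;> subst h
    · exact key3 ε hε0 (1/2) (-2) (-2) 1 2 (by rw [e1]; norm_num) (by rw [e2]; norm_num)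
        (by rw [e3]; norm_num)
        (by norm_num [Multiset.insert_eq_cons, Multiset.filter_cons, Multiset.filter_singleton])
        (by norm_num [Multiset.insert_eq_cons, Multiset.filter_cons, Multiset.filter_singleton])
    · exact keyQ ε hε0 (1/2) 1 1 1 0 (by norm_num) (by rw [e1]; norm_num)
        (by rw [e2]; norm_num) (by rw [e3]; norm_num)
        (by rw [Multiset.filter_singleton]; norm_num)
        (by rw [Multiset.filter_singleton]; norm_num)
  -- (+,+,-,+) : v = 2 ; pairs (2,1),(0,1)
  · have hv : ((Finset.range 3).filter (fun i => ε i * ε (i + 1) < 0)).card = 2 := by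
      rw [hr]; norm_num [Finset.filter_insert, Finset.filter_singleton, hε0, e1, e2, e3]
    rw [hv] at hpos hposmod hneg hnegmod
    have : neg = 1 := by omega
    subst this
    have : pos = 2 ∨ pos = 0 := by omega
    rcases this with h | h <;> subst h
    · exact key3 ε hε0 1 1 (-3) 2 1 (by rw [e1]; norm_num) (by rw [e2]; norm_num)
        (by rw [e3]; norm_num)
        (by norm_num [Multiset.insert_eq_cons, Multiset.filter_cons, Multiset.filter_singleton])
        (by norm_num [Multiset.insert_eq_cons, Multiset.filter_cons, Multiset.filter_singleton])
    · exact keyQ ε hε0 (-2) (-1) 1 0 1 (by norm_num) (by rw [e1]; norm_num)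
        (by rw [e2]; norm_num) (by rw [e3]; norm_num)
        (by rw [Multiset.filter_singleton]; norm_num)
        (by rw [Multiset.filter_singleton]; norm_num)
  -- (+,+,-,-) : v = 1 ; pairs (1,2),(1,0)
  · have hv : ((Finset.range 3).filter (fun i => ε i * ε (i + 1) < 0)).card = 1 := by
      rw [hr]; norm_num [Finset.filter_insert, Finset.filter_singleton, hε0, e1, e2, e3]
    rw [hv] at hpos hposmod hneg hnegmod
    have : pos = 1 := by omega
    subst this
    have : neg = 2 ∨ neg = 0 := by omega
    rcases this with h | h <;> subst h
    · exact key3 ε hε0 1 (-1) (-1) 1 2 (by rw [e1]; norm_num) (by rw [e2]; norm_num)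
        (by rw [e3]; norm_num)
        (by norm_num [Multiset.insert_eq_cons, Multiset.filter_cons, Multiset.filter_singleton])
        (by norm_num [Multiset.insert_eq_cons, Multiset.filter_cons, Multiset.filter_singleton])
    · exact keyQ ε hε0 1 2 (3/2) 1 0 (by norm_num) (by rw [e1]; norm_num)
        (by rw [e2]; norm_num) (by rw [e3]; norm_num)
        (by rw [Multiset.filter_singleton]; norm_num)
        (by rw [Multiset.filter_singleton]; norm_num)
  -- (+,-,+,+) : v = 2 ; pairs (2,1),(0,1)
  · have hv : ((Finset.range 3).filter (fun i => ε i * ε (i + 1) < 0)).card = 2 := by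
      rw [hr]; norm_num [Finset.filter_insert, Finset.filter_singleton, hε0, e1, e2, e3]
    rw [hv] at hpos hposmod hneg hnegmod
    have : neg = 1 := by omega
    subst this
    have : pos = 2 ∨ pos = 0 := by omega
    rcases this with h | h <;> subst h
    · exact key3 ε hε0 2 2 (-1/2) 2 1 (by rw [e1]; norm_num) (by rw [e2]; norm_num)
        (by rw [e3]; norm_num)
        (by norm_num [Multiset.insert_eq_cons, Multiset.filter_cons, Multiset.filter_singleton])
        (by norm_num [Multiset.insert_eq_cons, Multiset.filter_cons, Multiset.filter_singleton])
    · exact keyQ ε hε0 (-1/2) (-1) 1 0 1 (by norm_num) (by rw [e1]; norm_num)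
        (by rw [e2]; norm_num) (by rw [e3]; norm_num)
        (by rw [Multiset.filter_singleton]; norm_num)
        (by rw [Multiset.filter_singleton]; norm_num)
  -- (+,-,+,-) : v = 3 ; pairs (3,0),(1,0)
  · have hv : ((Finset.range 3).filter (fun i => ε i * ε (i + 1) < 0)).card = 3 := by
      rw [hr]; norm_num [Finset.filter_insert, Finset.filter_singleton, hε0, e1, e2, e3]
    rw [hv] at hpos hposmod hneg hnegmod
    have : neg = 0 := by omega
    subst this
    have : pos = 3 ∨ pos = 1 := by omega
    rcases this with h | h <;> subst h
    · exact key3 ε hε0 1 2 4 3 0 (by rw [e1]; norm_num) (by rw [e2]; norm_num)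
        (by rw [e3]; norm_num)
        (by norm_num [Multiset.insert_eq_cons, Multiset.filter_cons, Multiset.filter_singleton])
        (by norm_num [Multiset.insert_eq_cons, Multiset.filter_cons, Multiset.filter_singleton])
    · exact keyQ ε hε0 1 0 1 1 0 (by norm_num) (by rw [e1]; norm_num)
        (by rw [e2]; norm_num) (by rw [e3]; norm_num)
        (by rw [Multiset.filter_singleton]; norm_num)
        (by rw [Multiset.filter_singleton]; norm_num)
  -- (+,-,-,+) : v = 2 ; pairs (2,1),(0,1)
  · have hv : ((Finset.range 3).filter (fun i => ε i * ε (i + 1) < 0)).card = 2 := by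
      rw [hr]; norm_num [Finset.filter_insert, Finset.filter_singleton, hε0, e1, e2, e3]
    rw [hv] at hpos hposmod hneg hnegmod
    have : neg = 1 := by omega
    subst this
    have : pos = 2 ∨ pos = 0 := by omega
    rcases this with h | h <;> subst h
    · exact key3 ε hε0 1 1 (-1) 2 1 (by rw [e1]; norm_num) (by rw [e2]; norm_num)
        (by rw [e3]; norm_num)
        (by norm_num [Multiset.insert_eq_cons, Multiset.filter_cons, Multiset.filter_singleton])
        (by norm_num [Multiset.insert_eq_cons, Multiset.filter_cons, Multiset.filter_singleton])
    · exact keyQ ε hε0 (-1) (-2) (3/2) 0 1 (by norm_num) (by rw [e1]; norm_num)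
        (by rw [e2]; norm_num) (by rw [e3]; norm_num)
        (by rw [Multiset.filter_singleton]; norm_num)
        (by rw [Multiset.filter_singleton]; norm_num)
  -- (+,-,-,-) : v = 1 ; pairs (1,2),(1,0)
  · have hv : ((Finset.range 3).filter (fun i => ε i * ε (i + 1) < 0)).card = 1 := by
      rw [hr]; norm_num [Finset.filter_insert, Finset.filter_singleton, hε0, e1, e2, e3]
    rw [hv] at hpos hposmod hneg hnegmod
    have : pos = 1 := by omega
    subst this
    have : neg = 2 ∨ neg = 0 := by omega
    rcases this with h | h <;> subst h
    · exact key3 ε hε0 3 (-1) (-1) 1 2 (by rw [e1]; norm_num) (by rw [e2]; norm_num)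
        (by rw [e3]; norm_num)
        (by norm_num [Multiset.insert_eq_cons, Multiset.filter_cons, Multiset.filter_singleton])
        (by norm_num [Multiset.insert_eq_cons, Multiset.filter_cons, Multiset.filter_singleton])
    · exact keyQ ε hε0 2 1 1 1 0 (by norm_num) (by rw [e1]; norm_num)
        (by rw [e2]; norm_num) (by rw [e3]; norm_num)
        (by rw [Multiset.filter_singleton]; norm_num)
        (by rw [Multiset.filter_singleton]; norm_num)
end

section
/- If the quartic x^4 + x^3 + a x^2 + b x + c has two distinct double real roots, then b = a/2 - 1/8 and a < 3/8 and c >= 0. -/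
theorem quartic_two_double_roots (a b c r s : ℝ) (hrs : r ≠ s)
    (h : ∀ x : ℝ,
      x ^ 4 + x ^ 3 + a * x ^ 2 + b * x + c = (x - r) ^ 2 * (x - s) ^ 2) :
    b = a / 2 - 1 / 8 ∧ a < 3 / 8 ∧ 0 ≤ c := by
  have hsum : s = -1/2 - r := by
    linear_combination (1/24) * (h 2) - (1/24) * (h (-2)) - (1/12) * (h 1) + (1/12) * (h (-1))
  subst hsum
  have ha : a = 1/4 - r - 2*r^2 := by
    linear_combination (h 1)/2 + (h (-1))/2 - h 0
  have hb : b = a/2 - 1/8 := by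
    linear_combination (1/4) * (h 1) - (3/4) * (h (-1)) + (1/2) * (h 0)
  have hc : c = r^2 * (r + 1/2)^2 := by
    linear_combination h 0
  have hr : r + 1/4 ≠ 0 := by
    intro h'
    apply hrs
    have : r = -1/4 := by linarith
    rw [this]; norm_num
  have hpos : 0 < (r + 1/4)^2 := by positivity
  refine ⟨hb, by nlinarith, by nlinarith [sq_nonneg (r*(r+1/2))]⟩
end

section
/- Let P be a monic real quintic with sign pattern (+,-,-,-,-,+) (all coefficients nonzero). Then P cannot have exactly 0 positive roots and exactly 3 negative roots counted with multiplicity. -/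
open Polynomial

/-!
With no root at `0` or above and three negative roots, `p = (X + a)(X + b)(X + c) q` with
`a, b, c > 0` and `q = X² + uX + v` monic without real roots, so `u² < 4v`. A negative `X⁴`
coefficient `a + b + c + u` gives `-u > a + b + c`; together with
`(a + b + c)(ab + bc + ca) ≥ 4abc` this makes the `X` coefficient
`abc·u + (ab + bc + ca)·v > (-u)((-u)(ab + bc + ca) - 4abc) / 4` nonnegative.
-/

lemma Polynomial.Monic.eq_X_sq_add_C_mul_X_add_C_s18 {R : Type*} [CommSemiring R] {q : R[X]}
    (hq : q.Monic) (h2 : q.natDegree = 2) :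
    q = X ^ 2 + C (q.coeff 1) * X + C (q.coeff 0) := by
  conv_lhs => rw [hq.as_sum, h2]
  simp only [Finset.sum_range_succ, Finset.range_one, Finset.sum_singleton, pow_zero, mul_one, pow_one]
  ring

lemma Polynomial.Monic.coeff_one_sq_lt_of_roots_eq_zero {q : ℝ[X]} (hq : q.Monic)
    (h2 : q.natDegree = 2) (h : q.roots = 0) : q.coeff 1 ^ 2 < 4 * q.coeff 0 := by
  by_contra! hd
  set d := discrim 1 (q.coeff 1) (q.coeff 0)
  have hdisc : d = √d * √d := (Real.mul_self_sqrt (by simp only [d, discrim]; linarith)).symm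
  obtain ⟨x, hx⟩ := exists_quadratic_eq_zero one_ne_zero ⟨_, hdisc⟩
  have hroot : x ∈ q.roots := by
    rw [mem_roots hq.ne_zero, IsRoot, hq.eq_X_sq_add_C_mul_X_add_C_s18 h2]
    simp only [eval_add, eval_mul, eval_pow, eval_X, eval_C]
    linear_combination hx
  simp [h] at hroot

lemma neg_of_mem_roots_of_posRoots_eq_zero {p : ℝ[X]} (hpos : posRoots p = 0)
    (h0 : p.coeff 0 ≠ 0) {x : ℝ} (hx : x ∈ p.roots) : x < 0 := by
  have hnonpos : ¬ 0 < x :=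
    Multiset.filter_eq_nil.1 (Multiset.card_eq_zero.1 hpos) x hx
  have hne : x ≠ 0 := by
    rintro rfl
    exact h0 (by rw [coeff_zero_eq_eval_zero]; exact (mem_roots'.1 hx).2)
  exact lt_of_le_of_ne (not_lt.1 hnonpos) hne

lemma exists_eq_cubic_mul_quadratic {p : ℝ[X]} (hm : p.Monic) (hd : p.natDegree = 5)
    (hcard : Multiset.card p.roots = 3) (hneg : ∀ x ∈ p.roots, x < 0) :
    ∃ a b c u v : ℝ, 0 < a ∧ 0 < b ∧ 0 < c ∧ u ^ 2 < 4 * v ∧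
      p = (X + C a) * (X + C b) * (X + C c) * (X ^ 2 + C u * X + C v) := by
  obtain ⟨q, hpq, hdeg, hq⟩ := exists_prod_multiset_X_sub_C_mul p
  have hqm : q.Monic := (monic_multisetProd_X_sub_C _).of_mul_monic_left (hpq ▸ hm)
  have hq2 : q.natDegree = 2 := by omega
  rw [hqm.eq_X_sq_add_C_mul_X_add_C_s18 hq2] at hpq
  obtain ⟨r₁, r₂, r₃, hr⟩ := Multiset.card_eq_three.1 hcard
  refine ⟨-r₁, -r₂, -r₃, q.coeff 1, q.coeff 0, ?_, ?_, ?_,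
    hqm.coeff_one_sq_lt_of_roots_eq_zero hq2 hq, ?_⟩
  · simpa using hneg r₁ (by simp [hr])
  · simpa using hneg r₂ (by simp [hr])
  · simpa using hneg r₃ (by simp [hr])
  · rw [← hpq, hr]
    simp [sub_eq_add_neg, mul_assoc]

lemma coeff_four_nonneg_or_coeff_one_nonneg {a b c u v : ℝ} (ha : 0 < a) (hb : 0 < b)
    (hc : 0 < c) (huv : u ^ 2 < 4 * v) :
    0 ≤ ((X + C a) * (X + C b) * (X + C c) * (X ^ 2 + C u * X + C v)).coeff 4 ∨
      0 ≤ ((X + C a) * (X + C b) * (X + C c) * (X ^ 2 + C u * X + C v)).coeff 1 := by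
  have hc4 : ((X + C a) * (X + C b) * (X + C c) * (X ^ 2 + C u * X + C v)).coeff 4 =
      a + b + c + u := by
    simp [coeff_mul, Finset.Nat.antidiagonal_succ, coeff_X, coeff_C, coeff_X_pow]
  have hc1 : ((X + C a) * (X + C b) * (X + C c) * (X ^ 2 + C u * X + C v)).coeff 1 =
      a * b * c * u + (a * b + (a + b) * c) * v := by
    simp [coeff_mul, Finset.Nat.antidiagonal_succ, coeff_X, coeff_C]
  rw [hc4, hc1, or_iff_not_imp_left, not_le]
  intro h4
  have ht : 0 < a * b + b * c + c * a := by positivity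
  have hst : 4 * (a * b * c) ≤ (a + b + c) * (a * b + b * c + c * a) := by
    nlinarith [mul_pos (mul_pos ha hb) hc, mul_nonneg ha.le (sq_nonneg (b - c)),
      mul_nonneg hb.le (sq_nonneg (c - a)), mul_nonneg hc.le (sq_nonneg (a - b))]
  have hu : a + b + c < -u := by linarith
  have key : 0 ≤ 4 * (u * (a * b * c) + v * (a * b + b * c + c * a)) :=
    calc 0 ≤ -u * (-u * (a * b + b * c + c * a) - 4 * (a * b * c)) :=
          mul_nonneg (by linarith) (by nlinarith)
      _ = 4 * u * (a * b * c) + u ^ 2 * (a * b + b * c + c * a) := by ring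
      _ ≤ 4 * (u * (a * b * c) + v * (a * b + b * c + c * a)) := by
        nlinarith [mul_lt_mul_of_pos_right huv ht]
  linarith

theorem quintic_nonrealizable_general (p : Polynomial ℝ)
    (hm : p.Monic) (hd : p.natDegree = 5)
    (h4 : p.coeff 4 < 0) (h1 : p.coeff 1 < 0) (h0 : 0 < p.coeff 0) :
    ¬ (posRoots p = 0 ∧ negRoots p = 3) := by
  rintro ⟨hpos, hneg⟩
  have hroots_neg : ∀ x ∈ p.roots, x < 0 := fun x hx ↦
    neg_of_mem_roots_of_posRoots_eq_zero hpos h0.ne' hx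
  rw [negRoots, Multiset.filter_eq_self.2 hroots_neg] at hneg
  obtain ⟨a, b, c, u, v, ha, hb, hc, huv, rfl⟩ :=
    exists_eq_cubic_mul_quadratic hm hd hneg hroots_neg
  rcases coeff_four_nonneg_or_coeff_one_nonneg ha hb hc huv with h | h <;> linarith

theorem quintic_nonrealizable (p : Polynomial ℝ)
    (hm : p.Monic) (hd : p.natDegree = 5)
    (h4 : p.coeff 4 < 0) (h3 : p.coeff 3 < 0) (h2 : p.coeff 2 < 0)
    (h1 : p.coeff 1 < 0) (h0 : 0 < p.coeff 0) :
    ¬ (posRoots p = 0 ∧ negRoots p = 3) :=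
  quintic_nonrealizable_general p hm hd h4 h1 h0
end
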